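/- arXiv:2208.08782 — 12 statements merged into one kernel-verified Lean document; each statement's English description precedes it below -/
import Mathlib

section
/- For every discrete fair division instance with n agents, a finite set M of goods, and monotone normalized valuation functions v_i : 2^M → ℝ≥0 (v_i(∅) = 0 and v_i(S) ≤ v_i(T) whenever S ⊆ T), there exists an allocation that is envy-free up to one good (EF1): for every pair of agents i, j with A_j nonempty, there is a good g ∈ A_j such that v_i(A_i) ≥ v_i(A_j \ {g}). -/
/-!
Envy-cycle elimination. Goods are added one at a time, each to an agent whom nobody envies; the
new good itself then witnesses EF1 for that agent's enlarged bundle. An unenvied agent exists in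
every EF1 allocation of maximal total value: if every agent were envied, following "is envied
by" from agent to agent would run into a cycle, and giving each agent on it the bundle it envies
keeps the allocation EF1 (nobody's own value drops) while strictly increasing the total value.
-/

open Finset Function Equiv

namespace Function

variable {α : Type*}

theorem periodicPts_nonempty [Finite α] [Nonempty α] (f : α → α) : (periodicPts f).Nonempty := by
  obtain ⟨x⟩ := ‹Nonempty α›
  obtain ⟨m, n, hmn, heq⟩ := Finite.exists_ne_map_eq_of_infinite (fun k : ℕ => f^[k] x)
  wlog hlt : m < n generalizing m n
  · exact this n m hmn.symm heq.symm (by omega)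
  refine ⟨f^[m] x, mk_mem_periodicPts (n := n - m) (by omega) ?_⟩
  rw [IsPeriodicPt, IsFixedPt, ← iterate_add_apply, Nat.sub_add_cancel hlt.le]
  exact heq.symm

theorem exists_perm_rightInvOn_periodicPts (f : α → α) :
    ∃ σ : Perm α, Set.RightInvOn σ f (periodicPts f) ∧ ∀ x ∉ periodicPts f, σ x = x := by
  classical
  let π : Perm α := Perm.ofSubtype ((bijOn_periodicPts f).equiv f)
  refine ⟨π.symm, fun x hx => ?_, fun x hx => ?_⟩
  · have hσx : π.symm x ∈ periodicPts f := by
      rwa [← Perm.ofSubtype_apply_mem_iff_mem (p := (· ∈ periodicPts f)) _ (π.symm x),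
        apply_symm_apply]
    calc f (π.symm x) = π (π.symm x) :=
          (Perm.ofSubtype_apply_of_mem ((bijOn_periodicPts f).equiv f) hσx).symm
      _ = x := apply_symm_apply π x
  · rw [symm_apply_eq]
    exact (Perm.ofSubtype_apply_of_not_mem _ hx).symm

end Function

theorem exists_perm_forall_le_exists_lt {ι β : Type*} [Finite ι] [Nonempty ι] [Preorder β]
    (w : ι → ι → β) (h : ∀ j, ∃ i, w i i < w i j) :
    ∃ σ : Perm ι, (∀ i, w i i ≤ w i (σ i)) ∧ ∃ i, w i i < w i (σ i) := by
  choose f hf using h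
  obtain ⟨σ, hinv, hfix⟩ := exists_perm_rightInvOn_periodicPts f
  have hlt : ∀ i ∈ periodicPts f, w i i < w i (σ i) := fun i hi => by
    simpa only [hinv hi] using hf (σ i)
  refine ⟨σ, fun i => ?_, (periodicPts_nonempty f).imp hlt⟩
  by_cases hi : i ∈ periodicPts f
  · exact (hlt i hi).le
  · rw [hfix i hi]

section Allocation

variable {ι G : Type*} [DecidableEq G]

def IsAllocation [Fintype ι] (S : Finset G) (A : ι → Finset G) : Prop :=
  Pairwise (Disjoint on A) ∧ univ.biUnion A = S

def IsEF1 (v : ι → Finset G → ℝ) (A : ι → Finset G) : Prop :=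
  ∀ i j, (A j).Nonempty → ∃ g ∈ A j, v i ((A j).erase g) ≤ v i (A i)

namespace IsAllocation

variable [Fintype ι] {S : Finset G} {A : ι → Finset G}

theorem subset (h : IsAllocation S A) (i : ι) : A i ⊆ S :=
  h.2 ▸ subset_biUnion_of_mem A (mem_univ i)

theorem comp_perm (h : IsAllocation S A) (σ : Perm ι) : IsAllocation S (A ∘ σ) := by
  refine ⟨h.1.comp_of_injective σ.injective, ?_⟩
  ext g
  simp only [← h.2, mem_biUnion, mem_univ, true_and, comp_apply]
  exact σ.surjective.exists (p := fun a => g ∈ A a) |>.symm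

theorem update_insert [DecidableEq ι] (h : IsAllocation S A) {g : G} (hg : g ∉ S) (j : ι) :
    IsAllocation (insert g S) (update A j (insert g (A j))) := by
  have hgA : ∀ k, g ∉ A k := fun k hk => hg (h.subset k hk)
  have hmem : ∀ x k, x ∈ update A j (insert g (A j)) k ↔ k = j ∧ x = g ∨ x ∈ A k := by
    intro x k
    rcases eq_or_ne k j with rfl | hk
    · simp
    · simp [hk]
  refine ⟨fun k l hkl => disjoint_left.2 fun x hxk hxl => ?_, ?_⟩
  · rcases (hmem x k).1 hxk with ⟨rfl, rfl⟩ | hk <;> rcases (hmem x l).1 hxl with ⟨rfl, hx⟩ | hl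
    · exact hkl rfl
    · exact hgA l hl
    · exact hgA k (hx ▸ hk)
    · exact disjoint_left.1 (h.1 hkl) hk hl
  · ext x
    simp [← h.2, hmem, exists_or]

end IsAllocation

theorem finite_setOf_isAllocation [Fintype ι] (S : Finset G) :
    {A : ι → Finset G | IsAllocation S A}.Finite :=
  (Set.Finite.pi fun _ => S.powerset.finite_toSet).subset fun A hA i _ => by
    simpa using hA.subset i

namespace IsEF1

variable {v : ι → Finset G → ℝ} {A : ι → Finset G}

theorem comp_perm (h : IsEF1 v A) {σ : Perm ι} (hσ : ∀ i, v i (A i) ≤ v i (A (σ i))) :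
    IsEF1 v (A ∘ σ) := fun i j hj => by
  obtain ⟨g, hg, hle⟩ := h i (σ j) hj
  exact ⟨g, hg, hle.trans (hσ i)⟩

theorem update_insert [DecidableEq ι] (h : IsEF1 v A) {j : ι} (hj : ∀ i, v i (A j) ≤ v i (A i))
    {g : G} (hg : g ∉ A j) (hgain : v j (A j) ≤ v j (insert g (A j))) :
    IsEF1 v (update A j (insert g (A j))) := by
  have hown : ∀ i, v i (A i) ≤ v i (update A j (insert g (A j)) i) := fun i => by
    rcases eq_or_ne i j with rfl | hi
    · simpa using hgain
    · rw [update_of_ne hi]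
  intro i k hk
  rcases eq_or_ne k j with rfl | hkj
  · refine ⟨g, by simp, ?_⟩
    rw [update_self, erase_insert hg]
    exact (hj i).trans (hown i)
  · rw [update_of_ne hkj] at hk ⊢
    obtain ⟨g', hg', hle⟩ := h i k hk
    exact ⟨g', hg', hle.trans (hown i)⟩

end IsEF1

theorem exists_unenvied_of_forall_sum_le [Fintype ι] [Nonempty ι] {v : ι → Finset G → ℝ}
    {S : Finset G} {A : ι → Finset G} (hA : IsAllocation S A) (hEF1 : IsEF1 v A)
    (hmax : ∀ B, IsAllocation S B → IsEF1 v B → ∑ i, v i (B i) ≤ ∑ i, v i (A i)) :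
    ∃ j, ∀ i, v i (A j) ≤ v i (A i) := by
  by_contra! henvied
  obtain ⟨σ, hle, i, hlt⟩ := exists_perm_forall_le_exists_lt (fun i j => v i (A j)) henvied
  refine (hmax (A ∘ σ) (hA.comp_perm σ) (hEF1.comp_perm hle)).not_gt ?_
  exact sum_lt_sum (fun i _ => hle i) ⟨i, mem_univ i, hlt⟩

theorem exists_isAllocation_isEF1_unenvied [Fintype ι] [Nonempty ι] (v : ι → Finset G → ℝ)
    {S : Finset G} (h : ∃ A, IsAllocation S A ∧ IsEF1 v A) :
    ∃ A, IsAllocation S A ∧ IsEF1 v A ∧ ∃ j, ∀ i, v i (A j) ≤ v i (A i) := by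
  obtain ⟨A, ⟨hA, hEF1⟩, hmax⟩ := Set.exists_max_image {A | IsAllocation S A ∧ IsEF1 v A}
    (fun A => ∑ i, v i (A i)) ((finite_setOf_isAllocation S).subset fun _ hA => hA.1) h
  exact ⟨A, hA, hEF1, exists_unenvied_of_forall_sum_le hA hEF1 fun B hB hB' => hmax B ⟨hB, hB'⟩⟩

theorem exists_isAllocation_isEF1 [Fintype ι] [DecidableEq ι] [Nonempty ι] (M : Finset G)
    (v : ι → Finset G → ℝ) (hmono : ∀ i, ∀ S T : Finset G, S ⊆ T → T ⊆ M → v i S ≤ v i T) :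
    ∃ A, IsAllocation M A ∧ IsEF1 v A := by
  refine M.induction_on' ⟨fun _ => ∅, ⟨fun _ _ _ => disjoint_bot_left, by ext; simp⟩,
    fun _ _ h => absurd h not_nonempty_empty⟩ fun g S hgM hSM hgS ih => ?_
  obtain ⟨A, hA, hEF1, j, hj⟩ := exists_isAllocation_isEF1_unenvied v ih
  have hgA : g ∉ A j := fun hg => hgS (hA.subset j hg)
  refine ⟨_, hA.update_insert hgS j, hEF1.update_insert hj hgA ?_⟩
  exact hmono j _ _ (subset_insert g _) (insert_subset hgM ((hA.subset j).trans hSM))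

end Allocation

theorem ef1_exists_general {n : ℕ} (hn : 0 < n) {G : Type*} [DecidableEq G] (M : Finset G)
    (v : Fin n → Finset G → ℝ)
    (hmono : ∀ i, ∀ S T : Finset G, S ⊆ T → T ⊆ M → v i S ≤ v i T) :
    ∃ A : Fin n → Finset G,
      (∀ i j, i ≠ j → Disjoint (A i) (A j)) ∧
      Finset.univ.biUnion A = M ∧
      ∀ i j : Fin n, (A j).Nonempty → ∃ g ∈ A j, v i ((A j).erase g) ≤ v i (A i) := by
  have : Nonempty (Fin n) := ⟨⟨0, hn⟩⟩
  obtain ⟨A, ⟨hdisj, hunion⟩, hEF1⟩ := exists_isAllocation_isEF1 M v hmono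
  exact ⟨A, hdisj, hunion, hEF1⟩

/-- For every discrete fair division instance with `n` agents, a finite set `M`
of goods, and monotone normalized valuation functions, there exists an EF1 allocation. -/
theorem ef1_exists {n : ℕ} (hn : 0 < n) {G : Type*} [DecidableEq G] (M : Finset G)
    (v : Fin n → Finset G → ℝ)
    (hnorm : ∀ i, v i ∅ = 0)
    (hmono : ∀ i, ∀ S T : Finset G, S ⊆ T → T ⊆ M → v i S ≤ v i T) :
    ∃ A : Fin n → Finset G,
      (∀ i j, i ≠ j → Disjoint (A i) (A j)) ∧
      Finset.univ.biUnion A = M ∧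
      ∀ i j : Fin n, (A j).Nonempty → ∃ g ∈ A j, v i ((A j).erase g) ≤ v i (A i) :=
  ef1_exists_general hn M v hmono
end

section
/- For additive valuations, every maximum Nash welfare (MNW) allocation is Pareto optimal: if A maximizes, among all allocations, first the number of agents with positive value and then the product of the values of the agents with positive value, then there is no allocation B with v_i(B_i) ≥ v_i(A_i) for all agents i and v_j(B_j) > v_j(A_j) for some agent j. -/
open Finset
open scoped Classical

/-- The set of agents receiving positive value under allocation `A`. -/
noncomputable def posAgents {n : ℕ} {G : Type*} [DecidableEq G]
    (v : Fin n → G → ℝ) (A : Fin n → Finset G) : Finset (Fin n) :=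
  Finset.univ.filter (fun i => 0 < ∑ g ∈ A i, v i g)

/-- The Nash welfare: the product of values of the agents with positive value. -/
noncomputable def nashProd {n : ℕ} {G : Type*} [DecidableEq G]
    (v : Fin n → G → ℝ) (A : Fin n → Finset G) : ℝ :=
  ∏ i ∈ posAgents v A, ∑ g ∈ A i, v i g

/-- For additive valuations, every maximum Nash welfare allocation is
Pareto optimal. -/
theorem mnw_implies_po {n : ℕ} {G : Type*} [DecidableEq G] (M : Finset G)
    (v : Fin n → G → ℝ) (hv : ∀ i g, 0 ≤ v i g)
    (A : Fin n → Finset G)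
    (hA : (∀ i j, i ≠ j → Disjoint (A i) (A j)) ∧ Finset.univ.biUnion A = M)
    (hcount : ∀ B : Fin n → Finset G,
      ((∀ i j, i ≠ j → Disjoint (B i) (B j)) ∧ Finset.univ.biUnion B = M) →
      (posAgents v B).card ≤ (posAgents v A).card)
    (hprod : ∀ B : Fin n → Finset G,
      ((∀ i j, i ≠ j → Disjoint (B i) (B j)) ∧ Finset.univ.biUnion B = M) →
      (posAgents v B).card = (posAgents v A).card →
      nashProd v B ≤ nashProd v A) :
    ¬ ∃ B : Fin n → Finset G,
      ((∀ i j, i ≠ j → Disjoint (B i) (B j)) ∧ Finset.univ.biUnion B = M) ∧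
      (∀ i, ∑ g ∈ A i, v i g ≤ ∑ g ∈ B i, v i g) ∧
      (∃ j, ∑ g ∈ A j, v j g < ∑ g ∈ B j, v j g) := by
  rintro ⟨B, hB, hle, j, hj⟩
  have hsub : posAgents v A ⊆ posAgents v B := by
    intro i hi
    simp only [posAgents, Finset.mem_filter, Finset.mem_univ, true_and] at hi ⊢
    exact lt_of_lt_of_le hi (hle i)
  have hcard : (posAgents v B).card = (posAgents v A).card :=
    le_antisymm (hcount B hB) (Finset.card_le_card hsub)
  have heq : posAgents v A = posAgents v B :=
    Finset.eq_of_subset_of_card_le hsub (le_of_eq hcard)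
  have hjA : j ∈ posAgents v A := by
    by_contra h
    have hjB : j ∈ posAgents v B := by
      simp only [posAgents, Finset.mem_filter, Finset.mem_univ, true_and]
      exact lt_of_le_of_lt (Finset.sum_nonneg fun g _ => hv j g) hj
    rw [heq] at h; exact h hjB
  have hlt : nashProd v A < nashProd v B := by
    unfold nashProd
    rw [← heq]
    exact Finset.prod_lt_prod
      (fun i hi => by
        simpa only [posAgents, Finset.mem_filter, Finset.mem_univ, true_and] using hi)
      (fun i _ => hle i) ⟨j, hjA, hj⟩
  exact absurd (hprod B hB hcard) (not_le.mpr hlt)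
end

section
/- For any number n of agents who all share one common monotone normalized valuation function v on a finite set M of goods, there exists an allocation A = (A_1, …, A_n) that is envy-free up to any good (EFX): for every pair of agents i, j and every good g ∈ A_j, v(A_i) ≥ v(A_j \ {g}). -/
open Finset

/-- For any number `n > 0` of agents sharing one common monotone normalized
valuation `v` on a finite set `M` of goods, there exists an EFX allocation. -/
theorem efx_exists_identical {n : ℕ} (hn : 0 < n) {G : Type*} [DecidableEq G] (M : Finset G)
    (v : Finset G → ℝ)
    (hnorm : v ∅ = 0)
    (hmono : ∀ S T : Finset G, S ⊆ T → T ⊆ M → v S ≤ v T) :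
    ∃ A : Fin n → Finset G,
      (∀ i j, i ≠ j → Disjoint (A i) (A j)) ∧
      Finset.univ.biUnion A = M ∧
      ∀ i j : Fin n, ∀ g ∈ A j, v ((A j).erase g) ≤ v (A i) := by
  classical
  -- key : leximin++ key of a bundle
  set key : Finset G → ℝ ×ₗ ℕ := fun S => toLex (v S, S.card) with hkey
  set K : Finset (ℝ ×ₗ ℕ) := M.powerset.image key with hKdef
  set rank : Finset G → ℕ := fun S => (K.filter (fun y => y < key S)).card with hrankdef
  set F : Finset G → ℝ := fun S => (3:ℝ)⁻¹ ^ rank S with hFdef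
  have hFpos : ∀ S, 0 < F S := fun S => pow_pos (by norm_num) _
  have hstep : ∀ S T : Finset G, S ⊆ M → key S < key T → F T ≤ 3⁻¹ * F S := by
    intro S T hS hlt
    have hmem : key S ∈ K := mem_image_of_mem key (mem_powerset.mpr hS)
    have hss : K.filter (fun y => y < key S) ⊂ K.filter (fun y => y < key T) := by
      refine ⟨fun y hy => ?_, fun hsub => ?_⟩
      · rw [mem_filter] at hy ⊢
        exact ⟨hy.1, lt_trans hy.2 hlt⟩
      · exact absurd (mem_filter.mp (hsub (mem_filter.mpr ⟨hmem, hlt⟩))).2 (lt_irrefl _)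
    have hcard : rank S + 1 ≤ rank T := Finset.card_lt_card hss
    calc F T = 3⁻¹ ^ rank T := rfl
      _ ≤ 3⁻¹ ^ (rank S + 1) :=
          pow_le_pow_of_le_one (by norm_num) (by norm_num) hcard
      _ = 3⁻¹ * F S := by rw [pow_succ]; ring
  -- the (finite, nonempty) set of allocations
  set 𝒜 : Set (Fin n → Finset G) :=
    {A | (∀ i j, i ≠ j → Disjoint (A i) (A j)) ∧ Finset.univ.biUnion A = M} with h𝒜
  have hfin : 𝒜.Finite := by
    refine Set.Finite.subset (Set.Finite.pi (fun _ : Fin n => M.powerset.finite_toSet)) ?_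
    rintro A ⟨-, hb⟩ k -
    simp only [Finset.coe_powerset, Set.mem_preimage, Set.mem_setOf_eq, Finset.coe_subset]
    intro a ha
    rw [← hb]
    exact mem_biUnion.mpr ⟨k, mem_univ k, ha⟩
  have hne : 𝒜.Nonempty := by
    refine ⟨fun k => if k = ⟨0, hn⟩ then M else ∅, ?_, ?_⟩
    · intro i j hij
      by_cases hi : i = ⟨0, hn⟩
      · have hj : ¬ j = ⟨0, hn⟩ := fun h => hij (hi.trans h.symm)
        simp [hi, hj]
      · simp [hi]
    · ext a
      simp only [mem_biUnion, mem_univ, true_and]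
      constructor
      · rintro ⟨k, hk⟩
        by_cases h : k = ⟨0, hn⟩ <;> simp [h] at hk
        · exact hk
      · intro ha
        exact ⟨⟨0, hn⟩, by simpa using ha⟩
  obtain ⟨A, hA, hmin⟩ := Set.exists_min_image 𝒜 (fun A => ∑ k, F (A k)) hfin hne
  obtain ⟨hdisj, hcov⟩ := hA
  have hsub : ∀ k, A k ⊆ M := by
    intro k a ha
    rw [← hcov]
    exact mem_biUnion.mpr ⟨k, mem_univ k, ha⟩
  refine ⟨A, hdisj, hcov, ?_⟩
  intro i j g hg
  by_cases hij : i = j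
  · subst hij
    exact hmono _ _ (erase_subset g (A i)) (hsub i)
  · by_contra hcon
    push_neg at hcon
    have hgM : g ∈ M := hsub j hg
    have hgi : g ∉ A i := fun h => (Finset.disjoint_left.mp (hdisj i j hij) h) hg
    -- the improved allocation
    set B : Fin n → Finset G := fun k =>
      if k = i then insert g (A i) else if k = j then (A j).erase g else A k with hBdef
    have hmemB : ∀ a k, a ∈ B k ↔ ((a ∈ A k ∧ ¬(k = j ∧ a = g)) ∨ (k = i ∧ a = g)) := by
      intro a k
      by_cases hk : k = i
      · subst hk
        simp [hBdef, hij, mem_insert, hgi] <;> tauto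
      · by_cases hk2 : k = j
        · subst hk2
          simp [hBdef, hk, mem_erase] <;> tauto
        · simp [hBdef, hk, hk2]
    have hBmem : B ∈ 𝒜 := by
      constructor
      · intro k l hkl
        rw [Finset.disjoint_left]
        intro a hak hal
        rw [hmemB] at hak hal
        rcases hak with ⟨hak, hknj⟩ | ⟨hki, hag⟩
        · rcases hal with ⟨hal, hlnj⟩ | ⟨hli, hag⟩
          · exact (Finset.disjoint_left.mp (hdisj k l hkl) hak) hal
          · subst hag
            have hkj : k ≠ j := fun h => hknj ⟨h, rfl⟩
            exact (Finset.disjoint_left.mp (hdisj k j hkj) hak) hg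
        · subst hag
          rcases hal with ⟨hal, hlnj⟩ | ⟨hli, -⟩
          · have hlj : l ≠ j := fun h => hlnj ⟨h, rfl⟩
            exact (Finset.disjoint_left.mp (hdisj l j hlj) hal) hg
          · exact hkl (hki.trans hli.symm)
      · ext a
        simp only [mem_biUnion, mem_univ, true_and]
        constructor
        · rintro ⟨k, hk⟩
          rw [hmemB] at hk
          rcases hk with ⟨hk, -⟩ | ⟨-, hag⟩
          · exact hsub k hk
          · exact hag ▸ hgM
        · intro ha
          by_cases hag : a = g
          · exact ⟨i, (hmemB a i).mpr (Or.inr ⟨rfl, hag⟩)⟩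
          · rw [← hcov] at ha
            obtain ⟨k, -, hk⟩ := mem_biUnion.mp ha
            exact ⟨k, (hmemB a k).mpr (Or.inl ⟨hk, fun h => hag h.2⟩)⟩
    -- key inequalities
    have hkey1 : key (A i) < key ((A j).erase g) := by
      rw [hkey, Prod.Lex.lt_iff]
      exact Or.inl hcon
    have hkey2 : key (A i) < key (insert g (A i)) := by
      have hle : v (A i) ≤ v (insert g (A i)) :=
        hmono _ _ (subset_insert g (A i)) (insert_subset hgM (hsub i))
      rw [hkey, Prod.Lex.lt_iff]
      rcases lt_or_eq_of_le hle with h | h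
      · exact Or.inl h
      · refine Or.inr ⟨h, ?_⟩
        simp [card_insert_of_notMem hgi]
    have hFi : F (B i) ≤ 3⁻¹ * F (A i) := by
      have : B i = insert g (A i) := by simp [hBdef]
      rw [this]
      exact hstep _ _ (hsub i) hkey2
    have hFj : F (B j) ≤ 3⁻¹ * F (A i) := by
      have : B j = (A j).erase g := by simp [hBdef, Ne.symm hij]
      rw [this]
      exact hstep _ _ (hsub i) hkey1
    -- sum comparison
    have hsplit : ∀ C : Fin n → Finset G,
        ∑ k, F (C k) = F (C i) + F (C j) + ∑ k ∈ (univ.erase j).erase i, F (C k) := by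
      intro C
      rw [← Finset.sum_erase_add univ _ (mem_univ j),
        ← Finset.sum_erase_add (univ.erase j) _ (Finset.mem_erase.mpr ⟨hij, mem_univ i⟩)]
      ring
    have htail : ∑ k ∈ (univ.erase j).erase i, F (B k) = ∑ k ∈ (univ.erase j).erase i, F (A k) := by
      refine Finset.sum_congr rfl fun k hk => ?_
      rw [Finset.mem_erase, Finset.mem_erase] at hk
      have : B k = A k := by simp [hBdef, hk.1, hk.2.1]
      rw [this]
    have hlt : ∑ k, F (B k) < ∑ k, F (A k) := by
      rw [hsplit B, hsplit A, htail]
      have := hFpos (A i)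
      have := hFpos (A j)
      linarith
    exact absurd (hmin B hBmem) (not_le.mpr hlt)
end

section
/- Every ordered instance with additive valuations admits an EFX allocation: if there is an ordering g_1, …, g_m of the goods such that v_i(g_1) ≥ v_i(g_2) ≥ … ≥ v_i(g_m) for every agent i, then there exists an allocation A such that for every pair of agents i, j and every good g ∈ A_j, v_i(A_i) ≥ v_i(A_j \ {g}). -/
open Finset

/-- Every ordered instance with additive valuations admits an EFX allocation.
The goods are `g_1, …, g_m` (modeled as `Fin m` in its natural order) and every agent's
values are nonincreasing along this common order. -/
theorem efx_exists_ordered {n m : ℕ} (hn : 0 < n)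
    (v : Fin n → Fin m → ℝ) (hv : ∀ i g, 0 ≤ v i g)
    (hord : ∀ i : Fin n, ∀ k l : Fin m, k ≤ l → v i l ≤ v i k) :
    ∃ A : Fin n → Finset (Fin m),
      (∀ i j, i ≠ j → Disjoint (A i) (A j)) ∧
      Finset.univ.biUnion A = Finset.univ ∧
      ∀ i j : Fin n, ∀ g ∈ A j, ∑ x ∈ (A j).erase g, v i x ≤ ∑ x ∈ A i, v i x := by
  classical
  -- P t A : A is an EFX allocation of the t most valuable goods
  let P : ℕ → (Fin n → Finset (Fin m)) → Prop := fun t A =>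
    (∀ i j, i ≠ j → Disjoint (A i) (A j)) ∧
    Finset.univ.biUnion A = Finset.univ.filter (fun g => g.val < t) ∧
    ∀ i j : Fin n, ∀ g ∈ A j, ∑ x ∈ (A j).erase g, v i x ≤ ∑ x ∈ A i, v i x
  suffices h : ∀ t : ℕ, ∃ A, P t A by
    obtain ⟨A, h1, h2, h3⟩ := h m
    refine ⟨A, h1, ?_, h3⟩
    rw [h2]
    ext g
    simp [g.isLt]
  intro t
  induction t with
  | zero =>
    refine ⟨fun _ => ∅, fun i j _ => disjoint_empty_left _, ?_, ?_⟩
    · ext g; simp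
    · intro i j g hg; simp at hg
  | succ t ih =>
    by_cases htm : t < m
    · -- main step : add good ⟨t, htm⟩
      set gt : Fin m := ⟨t, htm⟩ with hgt
      -- pick an EFX allocation of the first t goods maximizing total utility
      have hne : Nonempty {A // P t A} := by
        obtain ⟨A, hA⟩ := ih; exact ⟨⟨A, hA⟩⟩
      obtain ⟨⟨A₀, hP₀⟩, hmax⟩ :=
        Finite.exists_max (fun A : {A // P t A} => ∑ i, ∑ x ∈ A.1 i, v i x)
      obtain ⟨hdisj₀, hcov₀, hefx₀⟩ := hP₀
      have hsub : ∀ j : Fin n, ∀ x ∈ A₀ j, x.val < t := by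
        intro j x hx
        have hxx : x ∈ Finset.univ.biUnion A₀ := mem_biUnion.2 ⟨j, mem_univ _, hx⟩
        rw [hcov₀] at hxx
        exact (mem_filter.1 hxx).2
      have hgtnot : ∀ j : Fin n, gt ∉ A₀ j := by
        intro j hjmem
        have := hsub j gt hjmem
        simp [hgt] at this
      -- there is an unenvied agent
      have hunenv : ∃ i0 : Fin n, ∀ i, ∑ x ∈ A₀ i0, v i x ≤ ∑ x ∈ A₀ i, v i x := by
        by_contra hcon
        push_neg at hcon
        choose w hw using hcon
        -- find a periodic point of w
        set x0 : Fin n := ⟨0, hn⟩ with hx0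
        obtain ⟨a, b, hab, heq⟩ :=
          Fintype.exists_ne_map_eq_of_card_lt (fun l : Fin (n+1) => w^[l.val] x0)
            (by simp)
        have hper0 : ∃ p : Fin n, ∃ k, 0 < k ∧ w^[k] p = p := by
          rcases lt_or_gt_of_ne hab with h | h
          · refine ⟨w^[a.val] x0, b.val - a.val, by omega, ?_⟩
            rw [← Function.iterate_add_apply, show b.val - a.val + a.val = b.val by omega, heq]
          · refine ⟨w^[b.val] x0, a.val - b.val, by omega, ?_⟩
            rw [← Function.iterate_add_apply, show a.val - b.val + b.val = a.val by omega, ← heq]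
        obtain ⟨p, hexk⟩ := hper0
        set k0 := Nat.find hexk with hk0def
        have hk0spec := Nat.find_spec hexk
        have hk0pos : 0 < k0 := hk0spec.1
        have hk0per : w^[k0] p = p := hk0spec.2
        have hmod : ∀ l, w^[l % k0] p = w^[l] p := by
          intro l
          induction l using Nat.strong_induction_on with
          | _ l ihl =>
            by_cases hl : l < k0
            · rw [Nat.mod_eq_of_lt hl]
            · push_neg at hl
              have h1 : l % k0 = (l - k0) % k0 := by
                conv_lhs => rw [show l = (l - k0) + k0 by omega]
                rw [Nat.add_mod_right]
              rw [h1, ihl (l - k0) (by omega)]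
              conv_rhs => rw [show l = (l - k0) + k0 by omega,
                Function.iterate_add_apply, hk0per]
        -- the rotation map along the envy cycle
        set τ : Fin n → Fin n := fun i =>
          if h : ∃ l, l < k0 ∧ w^[l] p = i then w^[h.choose + (k0 - 1)] p else i with hτ
        have hτpos : ∀ i (h : ∃ l, l < k0 ∧ w^[l] p = i),
            τ i = w^[h.choose + (k0 - 1)] p := by
          intro i h
          simp only [hτ]
          rw [dif_pos h]
        have hτneg : ∀ i, ¬(∃ l, l < k0 ∧ w^[l] p = i) → τ i = i := by
          intro i h
          simp only [hτ]
          rw [dif_neg h]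
        have hwτ : ∀ i (h : ∃ l, l < k0 ∧ w^[l] p = i), w (τ i) = i := by
          intro i h
          obtain ⟨hl, hspec⟩ := h.choose_spec
          have e1 : w (τ i) = w^[h.choose + (k0 - 1) + 1] p := by
            rw [hτpos i h, Function.iterate_succ_apply']
          rw [e1, show h.choose + (k0 - 1) + 1 = h.choose + k0 by omega,
            Function.iterate_add_apply, hk0per, hspec]
        have hτC : ∀ i (h : ∃ l, l < k0 ∧ w^[l] p = i),
            ∃ l, l < k0 ∧ w^[l] p = τ i := by
          intro i h
          refine ⟨(h.choose + (k0 - 1)) % k0, Nat.mod_lt _ hk0pos, ?_⟩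
          rw [hmod, hτpos i h]
        have hτinj : Function.Injective τ := by
          intro i1 i2 h12
          by_cases h1 : ∃ l, l < k0 ∧ w^[l] p = i1 <;>
            by_cases h2 : ∃ l, l < k0 ∧ w^[l] p = i2
          · have := congrArg w h12
            rwa [hwτ i1 h1, hwτ i2 h2] at this
          · obtain ⟨l, hl, hlp⟩ := hτC i1 h1
            exact absurd ⟨l, hl, by rw [hlp, h12, hτneg i2 h2]⟩ h2
          · obtain ⟨l, hl, hlp⟩ := hτC i2 h2
            exact absurd ⟨l, hl, by rw [hlp, ← h12, hτneg i1 h1]⟩ h1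
          · rwa [hτneg i1 h1, hτneg i2 h2] at h12
        have hτsurj : Function.Surjective τ :=
          Finite.injective_iff_surjective.1 hτinj
        -- pointwise utility (weakly, strictly on the cycle) increases under rotation
        have hpt : ∀ i, ∑ x ∈ A₀ i, v i x ≤ ∑ x ∈ A₀ (τ i), v i x := by
          intro i
          by_cases h : ∃ l, l < k0 ∧ w^[l] p = i
          · have h2 := hw (τ i)
            rw [hwτ i h] at h2
            exact h2.le
          · rw [hτneg i h]
        have hptp : ∑ x ∈ A₀ p, v p x < ∑ x ∈ A₀ (τ p), v p x := by
          have hp : ∃ l, l < k0 ∧ w^[l] p = p := ⟨0, hk0pos, rfl⟩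
          have := hw (τ p)
          rwa [hwτ p hp] at this
        -- the rotated allocation
        have hPA₁ : P t (fun i => A₀ (τ i)) := by
          refine ⟨?_, ?_, ?_⟩
          · intro i j hij
            exact hdisj₀ _ _ (fun hc => hij (hτinj hc))
          · rw [← hcov₀]
            apply Finset.Subset.antisymm
            · intro g hg
              rw [mem_biUnion] at hg ⊢
              obtain ⟨i, _, h⟩ := hg
              exact ⟨τ i, mem_univ _, h⟩
            · intro g hg
              rw [mem_biUnion] at hg ⊢
              obtain ⟨u, _, h⟩ := hg
              obtain ⟨i, hi⟩ := hτsurj u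
              exact ⟨i, mem_univ _, by rw [hi]; exact h⟩
          · intro i j g hg
            exact le_trans (hefx₀ i (τ j) g hg) (hpt i)
        have hlt : ∑ i, ∑ x ∈ A₀ i, v i x < ∑ i, ∑ x ∈ A₀ (τ i), v i x := by
          refine Finset.sum_lt_sum (fun i _ => hpt i) ⟨p, mem_univ _, hptp⟩
        have hle := hmax ⟨fun i => A₀ (τ i), hPA₁⟩
        exact absurd hlt (not_lt.2 hle)
      obtain ⟨i0, hi0⟩ := hunenv
      -- give good gt to the unenvied agent i0
      set A' : Fin n → Finset (Fin m) :=
        fun i => if i = i0 then insert gt (A₀ i0) else A₀ i with hA'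
      have hA'0 : A' i0 = insert gt (A₀ i0) := by simp [hA']
      have hA'ne : ∀ i, i ≠ i0 → A' i = A₀ i := by
        intro i h; simp [hA', h]
      have hgtval : (gt : ℕ) = t := rfl
      refine ⟨A', ?_, ?_, ?_⟩
      · intro i j hij
        by_cases hi : i = i0 <;> by_cases hj : j = i0
        · exact absurd (hi.trans hj.symm) hij
        · rw [hi, hA'0, hA'ne j hj, Finset.disjoint_insert_left]
          refine ⟨hgtnot j, hdisj₀ _ _ ?_⟩
          rw [← hi]; exact hij
        · rw [hj, hA'0, hA'ne i hi, Finset.disjoint_insert_right]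
          refine ⟨hgtnot i, hdisj₀ _ _ ?_⟩
          rw [← hj]; exact hij
        · rw [hA'ne i hi, hA'ne j hj]
          exact hdisj₀ _ _ hij
      · ext x
        simp only [mem_biUnion, mem_univ, true_and, mem_filter]
        constructor
        · rintro ⟨i, hi⟩
          by_cases h : i = i0
          · rw [h, hA'0, mem_insert] at hi
            rcases hi with h | h
            · have : (x : ℕ) = t := by rw [h, hgtval]
              omega
            · have := hsub i0 x h; omega
          · rw [hA'ne i h] at hi
            have := hsub i x hi; omega
        · intro hx
          by_cases hxt : x.val < t
          · have hxmem : x ∈ Finset.univ.biUnion A₀ := by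
              rw [hcov₀]; exact mem_filter.2 ⟨mem_univ _, hxt⟩
            obtain ⟨j, -, hj⟩ := mem_biUnion.1 hxmem
            by_cases h : j = i0
            · exact ⟨i0, by rw [hA'0]; exact mem_insert_of_mem (h ▸ hj)⟩
            · exact ⟨j, by rw [hA'ne j h]; exact hj⟩
          · have hxeq : x = gt := Fin.ext (by rw [hgtval]; omega)
            exact ⟨i0, by rw [hA'0, hxeq]; exact mem_insert_self _ _⟩
      · intro i j g hg
        have hAi : ∑ x ∈ A₀ i, v i x ≤ ∑ x ∈ A' i, v i x := by
          by_cases h : i = i0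
          · rw [h, hA'0, Finset.sum_insert (hgtnot i0)]
            have := hv i0 gt
            linarith
          · rw [hA'ne i h]
        by_cases hj : j = i0
        · rw [hj] at hg ⊢
          rw [hA'0] at hg ⊢
          by_cases hgg : g = gt
          · subst hgg
            rw [Finset.erase_insert (hgtnot i0)]
            exact le_trans (hi0 i) hAi
          · have hgB : g ∈ A₀ i0 := by
              rcases mem_insert.1 hg with h | h
              · exact absurd h hgg
              · exact h
            rw [Finset.erase_insert_of_ne (Ne.symm hgg),
              Finset.sum_insert (fun hc => hgtnot i0 (Finset.mem_of_mem_erase hc))]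
            have h1 : ∑ x ∈ (A₀ i0).erase g, v i x + v i g = ∑ x ∈ A₀ i0, v i x :=
              Finset.sum_erase_add _ _ hgB
            have h2 : v i gt ≤ v i g := by
              refine hord i g gt ?_
              have := hsub i0 g hgB
              rw [Fin.le_def, hgtval]
              omega
            have h3 : ∑ x ∈ A₀ i0, v i x ≤ ∑ x ∈ A₀ i, v i x := hi0 i
            linarith
        · rw [hA'ne j hj] at hg ⊢
          exact le_trans (hefx₀ i j g hg) hAi
    · -- no new good to add
      obtain ⟨A, h1, h2, h3⟩ := ih
      refine ⟨A, h1, ?_, h3⟩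
      rw [h2]
      ext g
      simp only [mem_filter, mem_univ, true_and]
      have := g.isLt
      omega
end

section
/- EFX allocations always exist for instances with two agents: for any finite set M of goods and any two additive valuations v_1, v_2, there exists a partition (A_1, A_2) of M such that for each i, j ∈ {1,2} and every good g ∈ A_j, v_i(A_i) ≥ v_i(A_j \ {g}). -/
/-!
Cut and choose. Agent 0 splits the goods into two bundles that are envy-free up to any good
for her own valuation; agent 1 takes the bundle he prefers, so he envies nobody, and agent 0
is content with either bundle. Such a split exists for any nonnegative additive valuation:
hand out the goods in decreasing order of value, each to the currently poorer bundle. The good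
just added is worth no more than anything already in its bundle, so removing any good from
that bundle leaves it no richer than it was before, hence no richer than the other bundle.
-/

open Finset

namespace EFX

variable {G β : Type*} [DecidableEq G] [AddCommMonoid β]

section Definitions

variable [LE β]

/-- The owner of `A` does not envy `B` once any single good is removed from `B`. -/
def EnvyFreeUpToAny (v : G → β) (A B : Finset G) : Prop :=
  ∀ g ∈ B, ∑ x ∈ B.erase g, v x ≤ ∑ x ∈ A, v x

def IsEFXSplit (v : G → β) (M A B : Finset G) : Prop :=
  Disjoint A B ∧ A ∪ B = M ∧ EnvyFreeUpToAny v A B ∧ EnvyFreeUpToAny v B A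

def IsEFXAllocation {ι : Type*} [Fintype ι] [DecidableEq ι] (v : ι → G → β) (M : Finset G)
    (A : ι → Finset G) : Prop :=
  (∀ i j, i ≠ j → Disjoint (A i) (A j)) ∧ univ.biUnion A = M ∧
    ∀ i j, EnvyFreeUpToAny (v i) (A i) (A j)

theorem IsEFXSplit.symm {v : G → β} {M A B : Finset G} (h : IsEFXSplit v M A B) :
    IsEFXSplit v M B A :=
  ⟨h.1.symm, union_comm A B ▸ h.2.1, h.2.2.2, h.2.2.1⟩

end Definitions

section EnvyFreeUpToAny

variable [PartialOrder β] [IsOrderedAddMonoid β] {v : G → β} {A B : Finset G}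

theorem EnvyFreeUpToAny.of_sum_le (hv : ∀ g, 0 ≤ v g) (h : ∑ x ∈ B, v x ≤ ∑ x ∈ A, v x) :
    EnvyFreeUpToAny v A B := fun _ _ =>
  (sum_le_sum_of_subset_of_nonneg (erase_subset _ _) fun x _ _ => hv x).trans h

theorem envyFreeUpToAny_self (hv : ∀ g, 0 ≤ v g) : EnvyFreeUpToAny v A A :=
  .of_sum_le hv le_rfl

theorem EnvyFreeUpToAny.mono_left (hv : ∀ g, 0 ≤ v g) {A' : Finset G} (hA : A ⊆ A')
    (h : EnvyFreeUpToAny v A B) : EnvyFreeUpToAny v A' B := fun g hg =>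
  (h g hg).trans (sum_le_sum_of_subset_of_nonneg hA fun x _ _ => hv x)

theorem envyFreeUpToAny_insert_of_sum_le {g : G} (hg : g ∉ A) (hgA : ∀ x ∈ A, v g ≤ v x)
    (h : ∑ x ∈ A, v x ≤ ∑ x ∈ B, v x) : EnvyFreeUpToAny v B (insert g A) := by
  intro h' hh'
  rcases eq_or_ne h' g with rfl | hne
  · rwa [erase_insert hg]
  · have hh'A : h' ∈ A := (mem_insert.1 hh').resolve_left hne
    calc ∑ x ∈ (insert g A).erase h', v x
        = v g + ∑ x ∈ A.erase h', v x := by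
          rw [erase_insert_of_ne hne.symm, sum_insert fun hgA' => hg (mem_of_mem_erase hgA')]
      _ ≤ v h' + ∑ x ∈ A.erase h', v x := add_le_add_left (hgA h' hh'A) _
      _ = ∑ x ∈ A, v x := add_sum_erase A v hh'A
      _ ≤ ∑ x ∈ B, v x := h

end EnvyFreeUpToAny

section TwoBundles

variable [LinearOrder β] [IsOrderedAddMonoid β]

section IsEFXSplit

variable {v : G → β} {M A B : Finset G}

theorem IsEFXSplit.insert_left (hv : ∀ g, 0 ≤ v g) (h : IsEFXSplit v M A B) {g : G} (hgM : g ∉ M)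
    (hgA : ∀ x ∈ A, v g ≤ v x) (hsum : ∑ x ∈ A, v x ≤ ∑ x ∈ B, v x) :
    IsEFXSplit v (insert g M) (insert g A) B := by
  obtain ⟨hdisj, rfl, hAB, -⟩ := h
  exact ⟨disjoint_insert_left.2 ⟨fun hgB => hgM (mem_union_right A hgB), hdisj⟩,
    insert_union g A B, hAB.mono_left hv (subset_insert g A),
    envyFreeUpToAny_insert_of_sum_le (fun hgA' => hgM (mem_union_left B hgA')) hgA hsum⟩

theorem exists_isEFXSplit (hv : ∀ g, 0 ≤ v g) (M : Finset G) :
    ∃ A B, IsEFXSplit v M A B := by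
  induction M using induction_on_min_value v with
  | empty => exact ⟨∅, ∅, by simp [IsEFXSplit, EnvyFreeUpToAny]⟩
  | insert g M hgM hgmin ih =>
    obtain ⟨A, B, hAB⟩ := ih
    have hgmin' : ∀ S ⊆ M, ∀ x ∈ S, v g ≤ v x := fun S hS x hx => hgmin x (hS hx)
    rcases le_total (∑ x ∈ A, v x) (∑ x ∈ B, v x) with hle | hle
    · exact ⟨_, _, hAB.insert_left hv hgM (hgmin' A (hAB.2.1 ▸ subset_union_left)) hle⟩
    · exact ⟨_, _, hAB.symm.insert_left hv hgM
        (hgmin' B (hAB.2.1 ▸ subset_union_right)) hle⟩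

end IsEFXSplit

theorem isEFXAllocation_pair {v : Fin 2 → G → β} (hv : ∀ i g, 0 ≤ v i g) {M A₀ A₁ : Finset G}
    (hdisj : Disjoint A₀ A₁) (hunion : A₀ ∪ A₁ = M) (h₀ : EnvyFreeUpToAny (v 0) A₀ A₁)
    (h₁ : EnvyFreeUpToAny (v 1) A₁ A₀) : IsEFXAllocation v M ![A₀, A₁] := by
  refine ⟨?_, ?_, ?_⟩
  · intro i j hij
    fin_cases i <;> fin_cases j <;> simp_all [disjoint_comm]
  · simp [← hunion, Fin.univ_succ, biUnion_insert]
  · intro i j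
    fin_cases i <;> fin_cases j
    exacts [envyFreeUpToAny_self (hv 0), h₀, h₁, envyFreeUpToAny_self (hv 1)]

theorem exists_isEFXAllocation_two {v : Fin 2 → G → β} (hv : ∀ i g, 0 ≤ v i g)
    (M : Finset G) : ∃ A, IsEFXAllocation v M A := by
  obtain ⟨A, B, hdisj, hunion, hAB, hBA⟩ := exists_isEFXSplit (hv 0) M
  rcases le_total (∑ x ∈ B, v 1 x) (∑ x ∈ A, v 1 x) with h | h
  · exact ⟨_, isEFXAllocation_pair hv hdisj.symm (union_comm A B ▸ hunion) hBA
      (.of_sum_le (hv 1) h)⟩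
  · exact ⟨_, isEFXAllocation_pair hv hdisj hunion hAB (.of_sum_le (hv 1) h)⟩

end TwoBundles

end EFX

/-- EFX allocations always exist for instances with two agents and additive
valuations. -/
theorem efx_exists_two_agents {G : Type*} [DecidableEq G] (M : Finset G)
    (v : Fin 2 → G → ℝ) (hv : ∀ i g, 0 ≤ v i g) :
    ∃ A : Fin 2 → Finset G,
      (∀ i j, i ≠ j → Disjoint (A i) (A j)) ∧
      Finset.univ.biUnion A = M ∧
      ∀ i j : Fin 2, ∀ g ∈ A j, ∑ x ∈ (A j).erase g, v i x ≤ ∑ x ∈ A i, v i x :=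
  EFX.exists_isEFXAllocation_two hv M
end

section
/- For every instance with n agents and additive valuations there exists a 1/2-EFX allocation: an allocation A such that for every pair of agents i, j and every good g ∈ A_j, v_i(A_i) ≥ (1/2) · v_i(A_j \ {g}). -/
open Finset

/-- For every instance with `n > 0` agents and additive valuations there
exists a 1/2-EFX allocation. -/
theorem half_efx_exists {n : ℕ} (hn : 0 < n) {G : Type*} [DecidableEq G] (M : Finset G)
    (v : Fin n → G → ℝ) (hv : ∀ i g, 0 ≤ v i g) :
    ∃ A : Fin n → Finset G,
      (∀ i j, i ≠ j → Disjoint (A i) (A j)) ∧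
      Finset.univ.biUnion A = M ∧
      ∀ i j : Fin n, ∀ g ∈ A j,
        (1 / 2) * ∑ x ∈ (A j).erase g, v i x ≤ ∑ x ∈ A i, v i x := by
  classical
  set val : Fin n → Finset G → ℝ := fun i S => ∑ x ∈ S, v i x with hvaldef
  have val_nonneg : ∀ i S, 0 ≤ val i S := fun i S => Finset.sum_nonneg fun x _ => hv i x
  have val_mono : ∀ (i : Fin n) {S T : Finset G}, S ⊆ T → val i S ≤ val i T :=
    fun i {S T} h => Finset.sum_le_sum_of_subset_of_nonneg h fun x _ _ => hv i x
  set Valid : (Fin n → Finset G) → Prop := fun A =>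
    (∀ i j, i ≠ j → Disjoint (A i) (A j)) ∧
    (∀ i j, ∀ g ∈ A j, (1 / 2 : ℝ) * val i ((A j).erase g) ≤ val i (A i)) with hValiddef
  set s : Finset (Fin n → Finset G) :=
    (Fintype.piFinset fun _ : Fin n => M.powerset).filter Valid with hsdef
  have mem_s : ∀ A, A ∈ s ↔ (∀ i, A i ⊆ M) ∧ Valid A := by
    intro A
    simp [hsdef, Fintype.mem_piFinset, Finset.mem_powerset, Finset.mem_filter]
  set u : (Fin n → Finset G) → ℝ := fun A => ∑ i, val i (A i) with hudef
  have hne : s.Nonempty := by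
    refine ⟨fun _ => ∅, (mem_s _).2 ⟨fun i => Finset.empty_subset M, ?_, ?_⟩⟩
    · intro i j _; simp
    · intro i j g hg; simp at hg
  -- first maximize u
  obtain ⟨A₀, hA₀s, hA₀max⟩ := Finset.exists_max_image s u hne
  set s' : Finset (Fin n → Finset G) := s.filter (fun B => u B = u A₀) with hs'def
  have hA₀s' : A₀ ∈ s' := by simp [hs'def, hA₀s]
  obtain ⟨A, hAs', hAmax⟩ :=
    Finset.exists_max_image s' (fun B => (Finset.univ.biUnion B).card) ⟨A₀, hA₀s'⟩
  have hAs : A ∈ s := (Finset.mem_filter.1 hAs').1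
  have hAu : u A = u A₀ := (Finset.mem_filter.1 hAs').2
  have humax : ∀ B ∈ s, u B ≤ u A := fun B hB => (hA₀max B hB).trans_eq hAu.symm
  have hcmax : ∀ B ∈ s, u B = u A →
      (Finset.univ.biUnion B).card ≤ (Finset.univ.biUnion A).card := by
    intro B hB hBu
    exact hAmax B (Finset.mem_filter.2 ⟨hB, hBu.trans hAu⟩)
  obtain ⟨hAsub, hAdisj, hAinv⟩ : (∀ i, A i ⊆ M) ∧ _ := (mem_s A).1 hAs
  -- the allocation A is complete
  have hcomplete : Finset.univ.biUnion A = M := by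
    refine Finset.Subset.antisymm ?_ ?_
    · intro x hx
      obtain ⟨i, _, hi⟩ := Finset.mem_biUnion.1 hx
      exact hAsub i hi
    intro g hgM
    by_contra hgA
    have hgAj : ∀ j, g ∉ A j := by
      intro j hj
      exact hgA (Finset.mem_biUnion.2 ⟨j, Finset.mem_univ j, hj⟩)
    by_cases h1 : ∃ k, val k (A k) < v k g
    · -- Case 1: someone values g more than their own bundle; give them {g} alone.
      obtain ⟨k, hk⟩ := h1
      set B : Fin n → Finset G := Function.update A k {g} with hBdef
      have hBk : B k = {g} := by simp [hBdef]
      have hBne : ∀ j, j ≠ k → B j = A j := by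
        intro j hj; simp [hBdef, Function.update_of_ne hj]
      have hBval : ∀ p, val p (A p) ≤ val p (B p) := by
        intro p
        by_cases hp : p = k
        · subst hp; rw [hBk]; simp only [hvaldef]; rw [Finset.sum_singleton]
          exact hk.le
        · rw [hBne p hp]
      have hBs : B ∈ s := by
        refine (mem_s B).2 ⟨?_, ?_, ?_⟩
        · intro i
          by_cases hi : i = k
          · subst hi; rw [hBk]; simpa using hgM
          · rw [hBne i hi]; exact hAsub i
        · intro i j hij
          by_cases hi : i = k
          · subst hi
            rw [hBk, hBne j (Ne.symm hij)]
            simpa [Finset.disjoint_singleton_left] using hgAj j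
          · by_cases hj : j = k
            · subst hj
              rw [hBk, hBne i hi]
              simpa [Finset.disjoint_singleton_right] using hgAj i
            · rw [hBne i hi, hBne j hj]; exact hAdisj i j hij
        · intro p j g' hg'
          by_cases hj : j = k
          · subst hj
            rw [hBk] at hg' ⊢
            rcases Finset.mem_singleton.1 hg' with rfl
            rw [Finset.erase_singleton]
            have : val p (∅ : Finset G) = 0 := by simp [hvaldef]
            rw [this]
            simpa using val_nonneg p (B p)
          · rw [hBne j hj]
            exact (hAinv p j g' (by rwa [hBne j hj] at hg')).trans (hBval p)
      have hlt : u A < u B := by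
        have hsum : u B - u A = v k g - val k (A k) := by
          have : u B - u A = ∑ i, (val i (B i) - val i (A i)) := by
            rw [Finset.sum_sub_distrib]
          rw [this]
          rw [Finset.sum_eq_single k]
          · rw [hBk]; simp only [hvaldef]; rw [Finset.sum_singleton]
          · intro b _ hb; rw [hBne b hb]; ring
          · intro hb; exact absurd (Finset.mem_univ k) hb
        have := hk
        linarith [hsum]
      exact absurd (humax B hBs) (not_le.2 hlt)
    · push_neg at h1
      -- Case 2: everyone weakly prefers their bundle to g.
      -- Find an unenvied agent.
      by_cases h2 : ∀ i, ∃ k, val k (A k) < val k (A i)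
      · -- no source: build an envy cycle and rotate, contradicting u-maximality
        choose f hf using h2
        obtain ⟨a, b, hab, hfab⟩ :=
          Finite.exists_ne_map_eq_of_infinite (fun t : ℕ => f^[t] ⟨0, hn⟩)
        wlog hlt : a < b generalizing a b
        · exact this b a hab.symm hfab.symm (by omega)
        set y : Fin n := f^[a] ⟨0, hn⟩ with hydef
        set p : ℕ := b - a with hpdef
        have hp0 : 0 < p := by omega
        have hyp : f^[p] y = y := by
          rw [hydef, ← Function.iterate_add_apply]
          have : p + a = b := by omega
          rw [this]; exact hfab.symm
        set O : Finset (Fin n) := (Finset.range p).image (fun t => f^[t] y) with hOdef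
        have hyO : y ∈ O := by
          refine Finset.mem_image.2 ⟨0, Finset.mem_range.2 hp0, rfl⟩
        have hsurj : ∀ j ∈ O, ∃ w ∈ O, f w = j := by
          intro j hj
          obtain ⟨t, ht, rfl⟩ := Finset.mem_image.1 hj
          rw [Finset.mem_range] at ht
          rcases Nat.eq_zero_or_pos t with rfl | ht0
          · refine ⟨f^[p - 1] y, Finset.mem_image.2 ⟨p - 1, Finset.mem_range.2 (by omega), rfl⟩, ?_⟩
            calc f (f^[p - 1] y) = f^[p - 1 + 1] y := (Function.iterate_succ_apply' f (p-1) y).symm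
              _ = f^[p] y := by congr 1; omega
              _ = y := hyp
              _ = f^[0] y := rfl
          · refine ⟨f^[t - 1] y, Finset.mem_image.2 ⟨t - 1, Finset.mem_range.2 (by omega), rfl⟩, ?_⟩
            calc f (f^[t - 1] y) = f^[t - 1 + 1] y := (Function.iterate_succ_apply' f (t-1) y).symm
              _ = f^[t] y := by congr 1; omega
        -- e j = a preimage of j under f inside O, for j ∈ O; identity elsewhere
        set e : Fin n → Fin n := fun j => if h : j ∈ O then (hsurj j h).choose else j with hedef
        have heO : ∀ j (h : j ∈ O), e j ∈ O ∧ f (e j) = j := by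
          intro j h
          rw [hedef]; simp only [dif_pos h]
          exact ⟨(hsurj j h).choose_spec.1, (hsurj j h).choose_spec.2⟩
        have heid : ∀ j, j ∉ O → e j = j := by
          intro j h; rw [hedef]; simp only [dif_neg h]
        have hkey : ∀ j, val j (A j) ≤ val j (A (e j)) := by
          intro j
          by_cases h : j ∈ O
          · obtain ⟨_, hfe⟩ := heO j h
            have := hf (e j)
            rw [hfe] at this
            exact this.le
          · rw [heid j h]
        have hkeystrict : val y (A y) < val y (A (e y)) := by
          obtain ⟨_, hfe⟩ := heO y hyO
          have := hf (e y)
          rw [hfe] at this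
          exact this
        have heinj : Function.Injective e := by
          intro a' b' hab'
          by_cases ha' : a' ∈ O <;> by_cases hb' : b' ∈ O
          · have h1' := (heO a' ha').2
            have h2' := (heO b' hb').2
            rw [← h1', ← h2', hab']
          · exfalso
            rw [heid b' hb'] at hab'
            exact hb' (hab' ▸ (heO a' ha').1)
          · exfalso
            rw [heid a' ha'] at hab'
            exact ha' (hab'.symm ▸ (heO b' hb').1)
          · rwa [heid a' ha', heid b' hb'] at hab'
        set B : Fin n → Finset G := fun j => A (e j) with hBdef
        have hBs : B ∈ s := by
          refine (mem_s B).2 ⟨fun i => hAsub (e i), ?_, ?_⟩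
          · intro i j hij
            exact hAdisj (e i) (e j) (fun h => hij (heinj h))
          · intro q j g' hg'
            exact (hAinv q (e j) g' hg').trans (hkey q)
        have hlt : u A < u B := by
          rw [hudef]
          refine Finset.sum_lt_sum (fun i _ => hkey i) ⟨y, Finset.mem_univ y, hkeystrict⟩
        exact absurd (humax B hBs) (not_le.2 hlt)
      · push_neg at h2
        obtain ⟨i, hi⟩ := h2
        -- hi : ∀ k, ¬ val k (A k) < val k (A i), i.e. val k (A i) ≤ val k (A k)
        have hsrc : ∀ k, val k (A i) ≤ val k (A k) := hi
        set B : Fin n → Finset G := Function.update A i (insert g (A i)) with hBdef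
        have hBi : B i = insert g (A i) := by simp [hBdef]
        have hBne : ∀ j, j ≠ i → B j = A j := by
          intro j hj; simp [hBdef, Function.update_of_ne hj]
        have hBval : ∀ q, val q (A q) ≤ val q (B q) := by
          intro q
          by_cases hq : q = i
          · subst hq; rw [hBi]; exact val_mono q (Finset.subset_insert g (A q))
          · rw [hBne q hq]
        have hBs : B ∈ s := by
          refine (mem_s B).2 ⟨?_, ?_, ?_⟩
          · intro j
            by_cases hj : j = i
            · subst hj; rw [hBi]; exact Finset.insert_subset hgM (hAsub j)
            · rw [hBne j hj]; exact hAsub j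
          · intro a' b' hab'
            by_cases ha' : a' = i
            · subst ha'
              rw [hBi, hBne b' (Ne.symm hab')]
              exact Finset.disjoint_insert_left.2 ⟨hgAj b', hAdisj a' b' hab'⟩
            · by_cases hb' : b' = i
              · subst hb'
                rw [hBi, hBne a' ha']
                exact Finset.disjoint_insert_right.2 ⟨hgAj a', hAdisj a' b' hab'⟩
              · rw [hBne a' ha', hBne b' hb']; exact hAdisj a' b' hab'
          · intro q j g' hg'
            by_cases hj : j = i
            · subst hj
              rw [hBi] at hg' ⊢
              rcases Finset.mem_insert.1 hg' with rfl | hg'A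
              · rw [Finset.erase_insert (hgAj j)]
                have h1' : val q (A j) ≤ val q (A q) := hsrc q
                have h2' : 0 ≤ val q (A j) := val_nonneg q (A j)
                have h3' := hBval q
                linarith
              · have hgne : g ≠ g' := fun h => hgAj j (h ▸ hg'A)
                have herase : (insert g (A j)).erase g' = insert g ((A j).erase g') := by
                  rw [Finset.erase_insert_of_ne (show g ≠ g' from fun h => hgAj j (by rw [h]; exact hg'A))]
                rw [herase]
                have hgnotin : g ∉ (A j).erase g' := fun h => hgAj j (Finset.mem_of_mem_erase h)
                have hsum : val q (insert g ((A j).erase g')) = v q g + val q ((A j).erase g') := by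
                  simp only [hvaldef]; rw [Finset.sum_insert hgnotin]
                rw [hsum]
                have h1' : val q ((A j).erase g') ≤ val q (A j) :=
                  val_mono q (Finset.erase_subset g' (A j))
                have h2' : val q (A j) ≤ val q (A q) := hsrc q
                have h3' : v q g ≤ val q (A q) := h1 q
                have h4' := hBval q
                linarith
            · rw [hBne j hj]
              exact (hAinv q j g' (by rwa [hBne j hj] at hg')).trans (hBval q)
        have hBu : u B = u A + v i g := by
          have : u B - u A = v i g := by
            have hsplit : u B - u A = ∑ k, (val k (B k) - val k (A k)) := by
              rw [Finset.sum_sub_distrib]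
            rw [hsplit, Finset.sum_eq_single i]
            · rw [hBi]
              have : val i (insert g (A i)) = v i g + val i (A i) := by
                simp only [hvaldef]; rw [Finset.sum_insert (hgAj i)]
              rw [this]; ring
            · intro b' _ hb'; rw [hBne b' hb']; ring
            · intro hb; exact absurd (Finset.mem_univ i) hb
          linarith
        have hBumax : u B = u A := le_antisymm (humax B hBs) (by rw [hBu]; linarith [hv i g])
        have hBunion : Finset.univ.biUnion B = insert g (Finset.univ.biUnion A) := by
          ext x
          simp only [Finset.mem_biUnion, Finset.mem_univ, true_and, Finset.mem_insert]
          constructor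
          · rintro ⟨j, hj⟩
            by_cases hji : j = i
            · subst hji
              rw [hBi] at hj
              rcases Finset.mem_insert.1 hj with rfl | hx
              · exact Or.inl rfl
              · exact Or.inr ⟨j, hx⟩
            · rw [hBne j hji] at hj
              exact Or.inr ⟨j, hj⟩
          · rintro (rfl | ⟨j, hj⟩)
            · exact ⟨i, by rw [hBi]; exact Finset.mem_insert_self _ _⟩
            · by_cases hji : j = i
              · subst hji
                exact ⟨j, by rw [hBi]; exact Finset.mem_insert_of_mem hj⟩
              · exact ⟨j, by rw [hBne j hji]; exact hj⟩
        have hclt : (Finset.univ.biUnion A).card < (Finset.univ.biUnion B).card := by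
          rw [hBunion, Finset.card_insert_of_notMem hgA]
          omega
        exact absurd (hcmax B hBs hBumax) (not_le.2 hclt)
  exact ⟨A, hAdisj, hcomplete, hAinv⟩
end

section
/- Monotonicity of the maximin share: for any agent with additive valuation v on a finite set M of goods, any integer n ≥ 2, and any good g ∈ M, it holds that μ^{n−1}(M \ {g}) ≥ μ^{n}(M), where μ^{k}(S) denotes the maximum over all partitions of S into k disjoint bundles of the minimum value of a bundle under v. -/
open Finset

/-- The maximin share `μ^k(S)` of an agent with additive valuation `v`: the maximum over
all partitions of `S` into `k` pairwise disjoint bundles of the minimum bundle value. -/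
noncomputable def maximinShare {G : Type*} [DecidableEq G] (v : G → ℝ) (k : ℕ)
    (S : Finset G) : ℝ :=
  sSup {x : ℝ | ∃ B : Fin k → Finset G,
    (∀ i j, i ≠ j → Disjoint (B i) (B j)) ∧
    Finset.univ.biUnion B = S ∧
    x = ⨅ j : Fin k, ∑ g ∈ B j, v g}

/-- Monotonicity of the maximin share: for any additive valuation `v`,
any `n ≥ 2`, and any good `g ∈ M`, `μ^{n-1}(M \ {g}) ≥ μ^{n}(M)`. -/
theorem maximinShare_monotone {G : Type*} [DecidableEq G] (v : G → ℝ) (hv : ∀ g, 0 ≤ v g)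
    (M : Finset G) (n : ℕ) (hn : 2 ≤ n) (g : G) (hg : g ∈ M) :
    maximinShare v n M ≤ maximinShare v (n - 1) (M.erase g) := by
  obtain ⟨m, rfl⟩ : ∃ m, n = m + 1 := ⟨n - 1, by omega⟩
  have hm : 0 < m := by omega
  set j0 : Fin m := ⟨0, hm⟩ with hj0
  haveI : Nonempty (Fin m) := ⟨j0⟩
  unfold maximinShare

  set A := {x : ℝ | ∃ B : Fin (m + 1) → Finset G,
    (∀ i j, i ≠ j → Disjoint (B i) (B j)) ∧
    Finset.univ.biUnion B = M ∧
    x = ⨅ j : Fin (m + 1), ∑ g ∈ B j, v g} with hA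
  set A' := {x : ℝ | ∃ B : Fin m → Finset G,
    (∀ i j, i ≠ j → Disjoint (B i) (B j)) ∧
    Finset.univ.biUnion B = M.erase g ∧
    x = ⨅ j : Fin m, ∑ g ∈ B j, v g} with hA'
  -- A' is bounded above by the total value
  have hbdd : BddAbove A' := by
    refine ⟨∑ a ∈ M, v a, ?_⟩
    rintro x ⟨C, _, hun, rfl⟩
    calc ⨅ j, ∑ a ∈ C j, v a ≤ ∑ a ∈ C j0, v a :=
          ciInf_le (Finite.bddBelow_range _) j0
      _ ≤ ∑ a ∈ M, v a := by
          apply Finset.sum_le_sum_of_subset_of_nonneg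
          · intro a ha
            have : a ∈ Finset.univ.biUnion C := Finset.mem_biUnion.2 ⟨j0, mem_univ _, ha⟩
            rw [hun] at this
            exact mem_of_mem_erase this
          · intros; exact hv _
  -- 0 ≤ sSup A' : the trivial partition
  have h0 : (0 : ℝ) ≤ sSup A' := by
    have hmem : (⨅ j : Fin m, ∑ a ∈ (fun j => if j = j0 then M.erase g else ∅) j, v a) ∈ A' := by
      refine ⟨_, ?_, ?_, rfl⟩
      · intro i j hij
        by_cases hi : i = j0
        · have : j ≠ j0 := fun h => hij (by rw [hi, h])
          simp [this]
        · simp [hi]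
      · ext a
        simp only [Finset.mem_biUnion, mem_univ, true_and]
        constructor
        · rintro ⟨j, hj⟩
          by_cases h : j = j0
          · simp only [h, if_pos] at hj; exact hj
          · simp [h] at hj
        · intro ha; exact ⟨j0, by simp [ha]⟩
    have hnn : (0 : ℝ) ≤ ⨅ j : Fin m, ∑ a ∈ (fun j => if j = j0 then M.erase g else ∅) j, v a :=
      le_ciInf fun j => Finset.sum_nonneg fun a _ => hv a
    exact hnn.trans (le_csSup hbdd hmem)
  refine Real.sSup_le ?_ h0
  rintro x ⟨B, hdisj, hun, rfl⟩
  -- find the bundle containing g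
  obtain ⟨i0, -, hi0⟩ := Finset.mem_biUnion.1 (hun.symm ▸ hg)
  set e : Fin m → Fin (m + 1) := i0.succAbove with he
  have heinj : Function.Injective e := Fin.succAbove_right_injective
  have hene : ∀ j, e j ≠ i0 := fun j => Fin.succAbove_ne i0 j
  set C : Fin m → Finset G := fun j => if j = j0 then B (e j) ∪ (B i0).erase g else B (e j)
    with hC
  have hCsub : ∀ j, C j ⊆ B (e j) ∪ (B i0).erase g := by
    intro j
    by_cases h : j = j0 <;> simp [hC, h, Finset.subset_union_left]
  have hBsubC : ∀ j, B (e j) ⊆ C j := by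
    intro j
    by_cases h : j = j0 <;> simp [hC, h, Finset.subset_union_left]
  -- C is a valid partition of M.erase g
  have hCdisj : ∀ i j, i ≠ j → Disjoint (C i) (C j) := by
    have key : ∀ i j, i ≠ j → j ≠ j0 → Disjoint (C i) (C j) := by
      intro i j hij hj
      have h1 : Disjoint (B (e i)) (B (e j)) := hdisj _ _ (fun h => hij (heinj h))
      have h2 : Disjoint ((B i0).erase g) (B (e j)) :=
        (hdisj i0 (e j) (fun h => hene j h.symm)).mono_left (Finset.erase_subset _ _)
      have : Disjoint (B (e i) ∪ (B i0).erase g) (C j) := by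
        rw [hC]; simp only [hij, hj, if_neg]
        exact Finset.disjoint_union_left.2 ⟨h1, h2⟩
      exact this.mono_left (hCsub i)
    intro i j hij
    by_cases hj : j = j0
    · have hi : i ≠ j0 := fun h => hij (h.trans hj.symm)
      exact (key j i hij.symm hi).symm
    · exact key i j hij hj
  have hCun : Finset.univ.biUnion C = M.erase g := by
    ext a
    simp only [Finset.mem_biUnion, mem_univ, true_and, Finset.mem_erase]
    constructor
    · rintro ⟨j, hj⟩
      have := hCsub j hj
      rcases Finset.mem_union.1 this with h | h
      · refine ⟨?_, hun ▸ Finset.mem_biUnion.2 ⟨e j, mem_univ _, h⟩⟩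
        intro hag
        exact (Finset.disjoint_left.1 (hdisj (e j) i0 (hene j)) h) (hag ▸ hi0)
      · exact ⟨Finset.ne_of_mem_erase h,
          hun ▸ Finset.mem_biUnion.2 ⟨i0, mem_univ _, Finset.mem_of_mem_erase h⟩⟩
    · rintro ⟨hag, haM⟩
      obtain ⟨i, _, hi⟩ := Finset.mem_biUnion.1 (hun.symm ▸ haM)
      by_cases h : i = i0
      · refine ⟨j0, ?_⟩
        have : a ∈ (B i0).erase g := Finset.mem_erase.2 ⟨hag, h ▸ hi⟩
        simp [hC, Finset.mem_union, this]
      · obtain ⟨j, hj⟩ := Fin.exists_succAbove_eq h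
        exact ⟨j, hBsubC j (by rw [he, hj]; exact hi)⟩
  -- the min over C is at least the min over B
  have hle : (⨅ j : Fin (m + 1), ∑ a ∈ B j, v a) ≤ ⨅ j : Fin m, ∑ a ∈ C j, v a := by
    refine le_ciInf fun j => ?_
    calc (⨅ j : Fin (m + 1), ∑ a ∈ B j, v a) ≤ ∑ a ∈ B (e j), v a :=
          ciInf_le (Finite.bddBelow_range _) (e j)
      _ ≤ ∑ a ∈ C j, v a :=
          Finset.sum_le_sum_of_subset_of_nonneg (hBsubC j) (fun a _ _ => hv a)
  exact hle.trans (le_csSup hbdd ⟨C, hCdisj, hCun, rfl⟩)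
end

section
/- If in an instance with n agents and additive valuations every single good is small relative to every agent's maximin share, i.e. v_i(g) ≤ μ_i^n(M)/2 for every agent i and every good g ∈ M, then there exists an allocation A with v_i(A_i) ≥ μ_i^n(M)/2 for every agent i. -/
open Finset

/-! Bag filling. Write `t i = μ_i / 2`; agent `i` values the whole of `M` at least
`n * μ_i = 2 n t i`. Fill a bag with goods one at a time until some agent values it at `t i` or
more, and give it to her. The bag was worth less than `t i` to every agent before its last good,
which is worth at most `t i`, so it is worth at most `2 t i` to everybody. Hence the invariant
"each remaining agent values the remaining goods at least at `2 * #(remaining agents) * t i`"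
survives, and the last agent takes everything that is left. -/

section MaximinShare

variable {G : Type*} [DecidableEq G] (v : G → ℝ)

theorem maximinShare_nonneg (hv : ∀ g, 0 ≤ v g) (k : ℕ) (S : Finset G) :
    0 ≤ maximinShare v k S := by
  refine Real.sSup_nonneg ?_
  rintro _ ⟨B, -, -, rfl⟩
  exact Real.iInf_nonneg fun j => sum_nonneg fun g _ => hv g

theorem mul_iInf_le_sum_of_partition {k : ℕ} {S : Finset G} {B : Fin k → Finset G}
    (hdisj : ∀ i j, i ≠ j → Disjoint (B i) (B j)) (hcov : univ.biUnion B = S) :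
    k * ⨅ j, ∑ g ∈ B j, v g ≤ ∑ g ∈ S, v g := by
  rw [← hcov, sum_biUnion fun i _ j _ hij => hdisj i j hij]
  simpa using card_nsmul_le_sum univ (fun j => ∑ g ∈ B j, v g) _
    fun j _ => ciInf_le (Set.finite_range _).bddBelow j

theorem mul_maximinShare_le_sum (hv : ∀ g, 0 ≤ v g) {k : ℕ} (hk : 0 < k) (S : Finset G) :
    k * maximinShare v k S ≤ ∑ g ∈ S, v g := by
  have hk' : (0 : ℝ) < k := by exact_mod_cast hk
  rw [mul_comm, ← le_div_iff₀ hk']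
  refine Real.sSup_le ?_ (div_nonneg (sum_nonneg fun g _ => hv g) hk'.le)
  rintro _ ⟨B, hdisj, hcov, rfl⟩
  rw [le_div_iff₀ hk', mul_comm]
  exact mul_iInf_le_sum_of_partition v hdisj hcov

end MaximinShare

section BagFilling

variable {ι G : Type*} [DecidableEq G] (v : ι → G → ℝ) (t : ι → ℝ)

theorem exists_bag_of_small_goods (ht : ∀ i, 0 ≤ t i) (T : Finset ι) (S : Finset G)
    (hsmall : ∀ i ∈ T, ∀ g ∈ S, v i g ≤ t i)
    (hreach : ∃ j ∈ T, t j ≤ ∑ g ∈ S, v j g) :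
    ∃ B ⊆ S, (∃ j ∈ T, t j ≤ ∑ g ∈ B, v j g) ∧ ∀ i ∈ T, ∑ g ∈ B, v i g ≤ 2 * t i := by
  induction S using Finset.induction_on with
  | empty =>
    exact ⟨∅, subset_refl _, hreach, fun i _ => by rw [sum_empty]; linarith [ht i]⟩
  | insert a S ha ih =>
    by_cases hS : ∃ j ∈ T, t j ≤ ∑ g ∈ S, v j g
    · obtain ⟨B, hBS, hB⟩ := ih (fun i hi g hg => hsmall i hi g (mem_insert_of_mem hg)) hS
      exact ⟨B, hBS.trans (subset_insert a S), hB⟩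
    · push Not at hS
      refine ⟨insert a S, subset_refl _, hreach, fun i hi => ?_⟩
      rw [sum_insert ha]
      linarith [hsmall i hi a (mem_insert_self a S), hS i hi]

variable [DecidableEq ι]

theorem exists_allocation_of_small_goods (ht : ∀ i, 0 ≤ t i) (T : Finset ι) (hT : T.Nonempty)
    (S : Finset G) (hsmall : ∀ i ∈ T, ∀ g ∈ S, v i g ≤ t i)
    (htotal : ∀ i ∈ T, 2 * #T * t i ≤ ∑ g ∈ S, v i g) :
    ∃ A : ι → Finset G, (T : Set ι).PairwiseDisjoint A ∧ T.biUnion A = S ∧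
      ∀ i ∈ T, t i ≤ ∑ g ∈ A i, v i g := by
  induction T using Finset.strongInduction generalizing S with
  | H T ih =>
    obtain ⟨j₀, hj₀⟩ := hT
    have hreach : ∃ j ∈ T, t j ≤ ∑ g ∈ S, v j g := by
      refine ⟨j₀, hj₀, le_trans ?_ (htotal j₀ hj₀)⟩
      have : (1 : ℝ) ≤ #T := by exact_mod_cast card_pos.2 ⟨j₀, hj₀⟩
      nlinarith [ht j₀]
    obtain ⟨B, hBS, ⟨j, hjT, hj⟩, hB⟩ := exists_bag_of_small_goods v t ht T S hsmall hreach
    obtain hT' | hT' := (T.erase j).eq_empty_or_nonempty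
    · have hTj : T = {j} := by
        rw [← insert_erase hjT, hT', insert_empty]
      subst hTj
      exact ⟨fun _ => S, by simp, by simp, fun i hi => by simpa [mem_singleton.1 hi] using hreach⟩
    obtain ⟨A, hAdisj, hAcov, hA⟩ := ih (T.erase j) (erase_ssubset hjT) hT' (S \ B)
      (fun i hi g hg => hsmall i (mem_of_mem_erase hi) g (mem_sdiff.1 hg).1)
      (fun i hi => by
        have hi' := mem_of_mem_erase hi
        rw [sum_sdiff_eq_sub hBS, card_erase_of_mem hjT,
          Nat.cast_sub (card_pos.2 ⟨j, hjT⟩), Nat.cast_one]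
        linarith [htotal i hi', hB i hi'])
    have hAsub : ∀ i ∈ T.erase j, A i ⊆ S \ B := fun i hi => hAcov ▸ subset_biUnion_of_mem A hi
    have hAj : ∀ i ∈ T.erase j, Function.update A j B i = A i := fun i hi =>
      Function.update_of_ne (ne_of_mem_erase hi) _ _
    refine ⟨Function.update A j B, ?_, ?_, ?_⟩
    · rw [← insert_erase hjT, coe_insert]
      refine Set.PairwiseDisjoint.insert (fun i hi k hk hik => ?_) fun i hi hji => ?_
      · rw [Function.onFun, hAj i hi, hAj k hk]
        exact hAdisj hi hk hik
      · rw [Function.update_self, hAj i hi]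
        exact disjoint_of_subset_right (hAsub i hi) disjoint_sdiff
    · rw [← insert_erase hjT, biUnion_insert, Function.update_self, biUnion_congr rfl hAj,
        hAcov, union_sdiff_of_subset hBS]
    · intro i hi
      obtain rfl | hij := eq_or_ne i j
      · simpa using hj
      · simpa [hij] using hA i (mem_erase.2 ⟨hij, hi⟩)

end BagFilling

/-- If every single good is worth at most half of every agent's maximin share,
then there is an allocation giving each agent at least half of her maximin share. -/
theorem half_mms_of_small_goods {n : ℕ} (hn : 0 < n) {G : Type*} [DecidableEq G]
    (M : Finset G) (v : Fin n → G → ℝ) (hv : ∀ i g, 0 ≤ v i g)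
    (hsmall : ∀ i : Fin n, ∀ g ∈ M, v i g ≤ maximinShare (v i) n M / 2) :
    ∃ A : Fin n → Finset G,
      (∀ i j, i ≠ j → Disjoint (A i) (A j)) ∧
      Finset.univ.biUnion A = M ∧
      ∀ i : Fin n, maximinShare (v i) n M / 2 ≤ ∑ g ∈ A i, v i g := by
  obtain ⟨A, hdisj, hcov, hA⟩ := exists_allocation_of_small_goods v
    (fun i => maximinShare (v i) n M / 2)
    (fun i => div_nonneg (maximinShare_nonneg (v i) (hv i) n M) zero_le_two)
    univ (univ_nonempty_iff.2 ⟨⟨0, hn⟩⟩) M (fun i _ => hsmall i) fun i _ => by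
      rw [card_univ, Fintype.card_fin]
      linarith [mul_maximinShare_le_sum (v i) (hv i) hn M]
  exact ⟨A, fun i j => hdisj (mem_coe.2 (mem_univ i)) (mem_coe.2 (mem_univ j)), hcov,
    fun i => hA i (mem_univ i)⟩
end

section
/- Reduction to ordered instances: let I = (N, M, v) be an instance with n agents, m goods, and additive valuations, fix an enumeration g_1, …, g_m of M, and form the ordered instance I' = (N, M, v') where v'_i(g_ℓ) equals the ℓ-th largest value among {v_i(g) : g ∈ M} (so v'_i(g_1) ≥ … ≥ v'_i(g_m) for every i). Then for any allocation A' = (A'_1, …, A'_n) of I' and any reals α_1, …, α_n with v'_i(A'_i) ≥ α_i for every agent i, there exists an allocation A = (A_1, …, A_n) of I such that v_i(A_i) ≥ α_i for every agent i. -/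
open Finset

section PickAux

noncomputable def pickStep {m : ℕ} (w : Fin m → ℝ) (S : Finset (Fin m)) (junk : Fin m) : Fin m :=
  if h : S.Nonempty then (S.exists_max_image w h).choose else junk

lemma pickStep_mem {m : ℕ} (w : Fin m → ℝ) {S : Finset (Fin m)} (junk : Fin m)
    (h : S.Nonempty) : pickStep w S junk ∈ S := by
  rw [pickStep, dif_pos h]
  exact (S.exists_max_image w h).choose_spec.1

lemma pickStep_max {m : ℕ} (w : Fin m → ℝ) {S : Finset (Fin m)} (junk : Fin m)
    (h : S.Nonempty) {g : Fin m} (hg : g ∈ S) : w g ≤ w (pickStep w S junk) := by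
  rw [pickStep, dif_pos h]
  exact (S.exists_max_image w h).choose_spec.2 g hg

variable {n m : ℕ} (v : Fin n → Fin m → ℝ) (owner : ℕ → Fin n) (junk : Fin m)

noncomputable def remSet : ℕ → Finset (Fin m)
  | 0 => Finset.univ
  | (ℓ+1) => (remSet ℓ).erase (pickStep (v (owner ℓ)) (remSet ℓ) junk)

noncomputable def pk (ℓ : ℕ) : Fin m :=
  pickStep (v (owner ℓ)) (remSet v owner junk ℓ) junk

lemma remSet_succ (ℓ : ℕ) :
    remSet v owner junk (ℓ+1) = (remSet v owner junk ℓ).erase (pk v owner junk ℓ) := rfl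

lemma card_remSet : ∀ ℓ : ℕ, ℓ ≤ m → (remSet v owner junk ℓ).card = m - ℓ := by
  intro ℓ
  induction ℓ with
  | zero => intro _; simp [remSet]
  | succ ℓ ih =>
    intro hℓ
    have hle : ℓ ≤ m := Nat.le_of_succ_le hℓ
    have hcard : (remSet v owner junk ℓ).card = m - ℓ := ih hle
    have hne : (remSet v owner junk ℓ).Nonempty := by
      rw [← Finset.card_pos, hcard]
      omega
    rw [remSet_succ, Finset.card_erase_of_mem (show pk v owner junk ℓ ∈ _ from pickStep_mem _ _ hne), hcard]
    omega

lemma remSet_nonempty {ℓ : ℕ} (hℓ : ℓ < m) : (remSet v owner junk ℓ).Nonempty := by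
  rw [← Finset.card_pos, card_remSet v owner junk ℓ (le_of_lt hℓ)]
  omega

lemma pk_mem {ℓ : ℕ} (hℓ : ℓ < m) : pk v owner junk ℓ ∈ remSet v owner junk ℓ :=
  pickStep_mem _ _ (remSet_nonempty v owner junk hℓ)

lemma remSet_subset : ∀ k ℓ : ℕ, k ≤ ℓ → remSet v owner junk ℓ ⊆ remSet v owner junk k := by
  intro k ℓ hkl
  induction ℓ with
  | zero => simp_all
  | succ ℓ ih =>
    rcases Nat.eq_or_lt_of_le hkl with h | h
    · rw [h]
    · exact (remSet_succ v owner junk ℓ ▸ Finset.erase_subset _ _).trans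
        (ih (Nat.lt_succ_iff.mp h))

lemma pk_injOn {k ℓ : ℕ} (hk : k < ℓ) (hℓ : ℓ < m) :
    pk v owner junk k ≠ pk v owner junk ℓ := by
  intro h
  have h1 : pk v owner junk ℓ ∈ remSet v owner junk (k+1) :=
    remSet_subset v owner junk (k+1) ℓ hk (pk_mem v owner junk hℓ)
  rw [remSet_succ] at h1
  exact (Finset.ne_of_mem_erase h1) h.symm

lemma pk_max {ℓ : ℕ} (hℓ : ℓ < m) {g : Fin m} (hg : g ∈ remSet v owner junk ℓ) :
    v (owner ℓ) g ≤ v (owner ℓ) (pk v owner junk ℓ) :=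
  pickStep_max _ _ (remSet_nonempty v owner junk hℓ) hg

/-- Key lemma: among the remaining goods at step `ℓ` there is one that agent `owner ℓ`
values at least as much as the `(ℓ+1)`-th largest of her values. -/
lemma pk_ge {v' : Fin n → Fin m → ℝ}
    (hperm : ∀ i : Fin n, ∃ σ : Equiv.Perm (Fin m), ∀ g, v' i g = v i (σ g))
    (hord : ∀ i : Fin n, ∀ k l : Fin m, k ≤ l → v' i l ≤ v' i k)
    (ℓ : Fin m) :
    v' (owner ℓ.val) ℓ ≤ v (owner ℓ.val) (pk v owner junk ℓ.val) := by
  set i := owner ℓ.val with hi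
  obtain ⟨σ, hσ⟩ := hperm i
  -- the top ℓ+1 goods of agent i (under v) are the image under σ of {0,…,ℓ}
  set T : Finset (Fin m) := (Finset.Iic ℓ).image σ with hT
  have hTcard : T.card = ℓ.val + 1 := by
    rw [hT, Finset.card_image_of_injective _ σ.injective, Fin.card_Iic]
  -- the remaining set misses only ℓ goods
  have hrc : (remSet v owner junk ℓ.val).card = m - ℓ.val :=
    card_remSet v owner junk ℓ.val (le_of_lt ℓ.isLt)
  have hcompl : (Finset.univ \ remSet v owner junk ℓ.val).card = ℓ.val := by
    rw [Finset.card_sdiff_of_subset (Finset.subset_univ _), Finset.card_univ, Fintype.card_fin, hrc]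
    omega
  -- so T meets the remaining set
  have hmeet : (T ∩ remSet v owner junk ℓ.val).Nonempty := by
    by_contra hcon
    rw [Finset.not_nonempty_iff_eq_empty] at hcon
    have hsub : T ⊆ Finset.univ \ remSet v owner junk ℓ.val := by
      intro x hx
      rw [Finset.mem_sdiff]
      refine ⟨Finset.mem_univ x, fun hxr => ?_⟩
      exact Finset.notMem_empty x (hcon ▸ Finset.mem_inter.mpr ⟨hx, hxr⟩)
    have := Finset.card_le_card hsub
    omega
  obtain ⟨g, hg⟩ := hmeet
  rw [Finset.mem_inter] at hg
  obtain ⟨hgT, hgr⟩ := hg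
  rw [hT, Finset.mem_image] at hgT
  obtain ⟨k, hk, hkg⟩ := hgT
  rw [Finset.mem_Iic] at hk
  calc v' i ℓ ≤ v' i k := hord i k ℓ hk
    _ = v i (σ k) := hσ k
    _ = v i g := by rw [hkg]
    _ ≤ v i (pk v owner junk ℓ.val) := pk_max v owner junk ℓ.isLt hgr

end PickAux

/-- Reduction to ordered instances. The goods are `g_1, …, g_m` (modeled as
`Fin m` in its natural order). `v'` is the corresponding ordered instance of `v`: for each
agent `i`, `v' i` is a rearrangement of `v i` (same multiset of single-good values) sorted
in nonincreasing order. For any allocation `A'` of the ordered instance in which each agent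
`i` gets value at least `α i`, there is an allocation `A` of the original instance in which
each agent `i` gets value at least `α i`. -/
theorem ordered_instance_reduction {n m : ℕ}
    (v v' : Fin n → Fin m → ℝ) (hv : ∀ i g, 0 ≤ v i g)
    (hperm : ∀ i : Fin n, ∃ σ : Equiv.Perm (Fin m), ∀ g, v' i g = v i (σ g))
    (hord : ∀ i : Fin n, ∀ k l : Fin m, k ≤ l → v' i l ≤ v' i k)
    (A' : Fin n → Finset (Fin m))
    (hA' : (∀ i j, i ≠ j → Disjoint (A' i) (A' j)) ∧ Finset.univ.biUnion A' = Finset.univ)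
    (α : Fin n → ℝ) (hα : ∀ i, α i ≤ ∑ g ∈ A' i, v' i g) :
    ∃ A : Fin n → Finset (Fin m),
      (∀ i j, i ≠ j → Disjoint (A i) (A j)) ∧
      Finset.univ.biUnion A = Finset.univ ∧
      ∀ i, α i ≤ ∑ g ∈ A i, v i g := by
  rcases Nat.eq_zero_or_pos m with hm | hm
  · -- no goods: everything is trivial
    subst hm
    refine ⟨A', hA'.1, hA'.2, fun i => ?_⟩
    calc α i ≤ ∑ g ∈ A' i, v' i g := hα i
      _ = ∑ g ∈ A' i, v i g := Finset.sum_congr rfl (fun g _ => g.elim0)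
  -- owners of goods in the ordered allocation
  have hex : ∀ g : Fin m, ∃ i, g ∈ A' i := by
    intro g
    have hg : g ∈ Finset.univ.biUnion A' := hA'.2.symm ▸ Finset.mem_univ g
    obtain ⟨i, _, hi⟩ := Finset.mem_biUnion.mp hg
    exact ⟨i, hi⟩
  set ownerF : Fin m → Fin n := fun g => (hex g).choose with hownerF
  have hownerF_mem : ∀ g : Fin m, g ∈ A' (ownerF g) := fun g => (hex g).choose_spec
  have howner_eq : ∀ g : Fin m, ∀ i : Fin n, g ∈ A' i → ownerF g = i := by
    intro g i hgi
    by_contra hne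
    exact (Finset.disjoint_left.mp (hA'.1 _ _ hne) (hownerF_mem g)) hgi
  set ownerN : ℕ → Fin n := fun ℓ => if h : ℓ < m then ownerF ⟨ℓ, h⟩ else ownerF ⟨0, hm⟩
    with hownerN
  set junk : Fin m := ⟨0, hm⟩ with hjunk
  set f : Fin m → Fin m := fun ℓ => pk v ownerN junk ℓ.val with hf
  have hfinj : Function.Injective f := by
    intro a b hab
    by_contra hne
    rcases lt_or_gt_of_ne hne with h | h
    · exact pk_injOn v ownerN junk (Fin.lt_iff_val_lt_val.mp h) b.isLt hab
    · exact pk_injOn v ownerN junk (Fin.lt_iff_val_lt_val.mp h) a.isLt hab.symm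
  -- the new allocation
  refine ⟨fun i => (A' i).image f, ?_, ?_, ?_⟩
  · intro i j hij
    exact (Finset.disjoint_image hfinj).mpr (hA'.1 i j hij)
  · have h1 : Finset.univ.biUnion (fun i => (A' i).image f)
        = (Finset.univ.biUnion A').image f := (Finset.biUnion_image).symm
    rw [h1, hA'.2]
    apply Finset.eq_univ_of_card
    rw [Finset.card_image_of_injective _ hfinj, Finset.card_univ]
  · intro i
    rw [Finset.sum_image (fun a _ b _ h => hfinj h)]
    refine (hα i).trans (Finset.sum_le_sum ?_)
    intro ℓ hℓ
    have hkey := pk_ge v ownerN junk hperm hord ℓ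
    have ho : ownerN ℓ.val = i := by
      rw [hownerN]
      simp only [ℓ.isLt, dif_pos]
      exact howner_eq _ i (by simpa using hℓ)
    rw [ho] at hkey
    exact hkey
end

section
/- PropX allocations may not exist: the instance with three agents having identical additive valuations over five goods with values (3, 3, 3, 3, 1) admits no allocation A such that for every agent i and every good g ∈ M \ A_i, v_i(A_i ∪ {g}) ≥ v_i(M)/3 (= 13/3). -/
open Finset

def wN : Fin 5 → ℕ := ![3, 3, 3, 3, 1]

lemma keyFun : ¬ ∃ f : Fin 5 → Fin 3, ∀ i g, f g ≠ i →
    13 ≤ 3 * (wN g + ∑ x ∈ univ.filter (fun x => f x = i), wN x) := by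
  set_option maxRecDepth 20000 in decide

/-- The common additive valuation `(3, 3, 3, 3, 1)` over the five goods. -/
noncomputable def wEx : Fin 5 → ℝ := ![3, 3, 3, 3, 1]

lemma wEx_eq (x : Fin 5) : wEx x = (wN x : ℝ) := by
  fin_cases x <;> simp [wEx, wN]

/-- PropX allocations may not exist: the instance with three agents having
identical additive valuations `(3, 3, 3, 3, 1)` over five goods admits no PropX allocation.
The proportional share here is `13/3`. -/
theorem no_propx_allocation :
    (∑ g, wEx g) / 3 = 13 / 3 ∧
    ¬ ∃ A : Fin 3 → Finset (Fin 5),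
      (∀ i j, i ≠ j → Disjoint (A i) (A j)) ∧
      Finset.univ.biUnion A = Finset.univ ∧
      ∀ i : Fin 3, ∀ g ∈ (Finset.univ : Finset (Fin 5)) \ A i,
        (∑ x, wEx x) / 3 ≤ ∑ x ∈ insert g (A i), wEx x := by
  have hsum : (∑ g, wEx g) = 13 := by
    simp [wEx, Fin.sum_univ_five]; norm_num
  refine ⟨by rw [hsum], ?_⟩
  rintro ⟨A, hdisj, hcov, hprop⟩
  apply keyFun
  have hmem : ∀ g : Fin 5, ∃ i, g ∈ A i := by
    intro g
    have : g ∈ Finset.univ.biUnion A := by rw [hcov]; exact mem_univ g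
    simpa using mem_biUnion.mp this
  choose f hf using hmem
  have hAeq : ∀ i, A i = univ.filter (fun x => f x = i) := by
    intro i
    ext g
    simp only [mem_filter, mem_univ, true_and]
    constructor
    · intro hg
      by_contra hne
      exact Finset.disjoint_left.mp (hdisj _ _ hne) (hf g) hg
    · rintro rfl; exact hf g
  refine ⟨f, fun i g hne => ?_⟩
  have hgA : g ∉ A i := by rw [hAeq]; simp [hne]
  have := hprop i g (by simp [hgA])
  rw [hsum, Finset.sum_insert hgA] at this
  have hcast : (∑ x ∈ A i, wEx x) = ((∑ x ∈ A i, wN x : ℕ) : ℝ) := by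
    push_cast; exact Finset.sum_congr rfl fun x _ => wEx_eq x
  rw [hcast, wEx_eq] at this
  rw [← hAeq i]
  have : (13 : ℝ) ≤ 3 * ((wN g + ∑ x ∈ A i, wN x : ℕ) : ℝ) := by
    push_cast
    rw [div_le_iff₀ (by norm_num : (0:ℝ) < 3)] at this
    push_cast at this
    linarith
  exact_mod_cast this
end

section
/- MMS is inapproximable for general monotone valuations: consider two agents and four goods g_1, g_2, g_3, g_4, where v_1(S) = 1 if {g_1, g_2} ⊆ S or {g_3, g_4} ⊆ S and v_1(S) = 0 otherwise, and v_2(S) = 1 if {g_1, g_3} ⊆ S or {g_2, g_4} ⊆ S and v_2(S) = 0 otherwise. Both valuations are monotone, the maximin shares satisfy μ_1^2(M) = μ_2^2(M) = 1, yet in every allocation (A_1, A_2) at least one agent i has v_i(A_i) = 0. -/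
open Finset


lemma val_le_one (P : Prop) [Decidable P] : (if P then (1:ℝ) else 0) ≤ 1 := by
  split <;> norm_num

lemma val_nonneg (P : Prop) [Decidable P] : (0:ℝ) ≤ (if P then (1:ℝ) else 0) := by
  split <;> norm_num

lemma mms_eq_one (v : Finset (Fin 4) → ℝ) (hle : ∀ S, v S ≤ 1)
    (B0 B1 : Finset (Fin 4)) (hd : Disjoint B0 B1) (hu : B0 ∪ B1 = Finset.univ)
    (h0 : v B0 = 1) (h1 : v B1 = 1) :
    sSup {x : ℝ | ∃ B : Fin 2 → Finset (Fin 4),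
      (∀ i j, i ≠ j → Disjoint (B i) (B j)) ∧
      Finset.univ.biUnion B = Finset.univ ∧
      x = ⨅ j : Fin 2, v (B j)} = 1 := by
  apply le_antisymm
  · apply csSup_le
    · refine ⟨⨅ j : Fin 2, v (![B0, B1] j), ![B0, B1], ?_, ?_, rfl⟩
      · intro i j hij
        fin_cases i <;> fin_cases j <;> simp_all [hd, hd.symm]
      · ext x; simp [Fin.exists_fin_two, ← hu, or_comm]
    · rintro x ⟨B, -, -, rfl⟩
      exact le_trans (ciInf_le (Finite.bddBelow_range _) 0) (hle _)
  · apply le_csSup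
    · refine ⟨1, ?_⟩
      rintro x ⟨B, -, -, rfl⟩
      exact le_trans (ciInf_le (Finite.bddBelow_range _) 0) (hle _)
    · refine ⟨![B0, B1], ?_, ?_, ?_⟩
      · intro i j hij
        fin_cases i <;> fin_cases j <;> simp_all [hd, hd.symm]
      · ext x; simp [Fin.exists_fin_two, ← hu, or_comm]
      · rw [eq_comm]
        apply le_antisymm
        · exact le_trans (ciInf_le (Finite.bddBelow_range _) 0) (by simp [h0])
        · apply le_ciInf; intro j; fin_cases j <;> simp [h0, h1]

/-- The maximin share `μ^k(S)` for a general (set-function) valuation `v`: the maximum over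
all partitions of `S` into `k` pairwise disjoint bundles of the minimum bundle value. -/
noncomputable def maximinShareGen {G : Type*} [DecidableEq G] (v : Finset G → ℝ) (k : ℕ)
    (S : Finset G) : ℝ :=
  sSup {x : ℝ | ∃ B : Fin k → Finset G,
    (∀ i j, i ≠ j → Disjoint (B i) (B j)) ∧
    Finset.univ.biUnion B = S ∧
    x = ⨅ j : Fin k, v (B j)}

/-- Agent 1's valuation: 1 iff the bundle contains `{g_1, g_2}` or `{g_3, g_4}`. -/
noncomputable def u1 : Finset (Fin 4) → ℝ := fun S =>
  if ({0, 1} : Finset (Fin 4)) ⊆ S ∨ ({2, 3} : Finset (Fin 4)) ⊆ S then 1 else 0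

/-- Agent 2's valuation: 1 iff the bundle contains `{g_1, g_3}` or `{g_2, g_4}`. -/
noncomputable def u2 : Finset (Fin 4) → ℝ := fun S =>
  if ({0, 2} : Finset (Fin 4)) ⊆ S ∨ ({1, 3} : Finset (Fin 4)) ⊆ S then 1 else 0

/-- MMS is inapproximable for general monotone valuations: both valuations
are normalized and monotone, both maximin shares equal 1, yet in every allocation at least
one agent gets value 0. -/
theorem mms_inapprox_general_valuations :
    u1 ∅ = 0 ∧ u2 ∅ = 0 ∧
    (∀ S T : Finset (Fin 4), S ⊆ T → u1 S ≤ u1 T) ∧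
    (∀ S T : Finset (Fin 4), S ⊆ T → u2 S ≤ u2 T) ∧
    maximinShareGen u1 2 Finset.univ = 1 ∧
    maximinShareGen u2 2 Finset.univ = 1 ∧
    (∀ A : Fin 2 → Finset (Fin 4),
      ((∀ i j, i ≠ j → Disjoint (A i) (A j)) ∧ Finset.univ.biUnion A = Finset.univ) →
      u1 (A 0) = 0 ∨ u2 (A 1) = 0) := by
  refine ⟨by simp [u1], by simp [u2], ?_, ?_, ?_, ?_, ?_⟩
  · intro S T hST
    unfold u1
    split
    · rename_i h
      rw [if_pos (h.imp (fun h' => h'.trans hST) (fun h' => h'.trans hST))]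
    · exact val_nonneg _
  · intro S T hST
    unfold u2
    split
    · rename_i h
      rw [if_pos (h.imp (fun h' => h'.trans hST) (fun h' => h'.trans hST))]
    · exact val_nonneg _
  · exact mms_eq_one u1 (fun S => val_le_one _) {0,1} {2,3} (by decide)
      (by decide) (by simp [u1]) (by simp [u2, u1])
  · exact mms_eq_one u2 (fun S => val_le_one _) {0,2} {1,3} (by decide)
      (by decide) (by simp [u2]) (by simp [u2])
  · rintro A ⟨hd, -⟩
    by_contra hc
    push_neg at hc
    obtain ⟨h1, h2⟩ := hc
    have hd01 : Disjoint (A 0) (A 1) := hd 0 1 (by decide)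
    unfold u1 at h1; unfold u2 at h2
    simp only [ne_eq, ite_eq_right_iff] at h1 h2
    push_neg at h1 h2
    obtain ⟨hc1, -⟩ := h1
    obtain ⟨hc2, -⟩ := h2
    rcases hc1 with hA | hA <;> rcases hc2 with hB | hB <;>
      simp only [Finset.insert_subset_iff, Finset.singleton_subset_iff] at hA hB
    · exact (Finset.disjoint_left.mp hd01) hA.1 hB.1
    · exact (Finset.disjoint_left.mp hd01) hA.2 hB.1
    · exact (Finset.disjoint_left.mp hd01) hA.1 hB.2
    · exact (Finset.disjoint_left.mp hd01) hA.2 hB.2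
end

section
/- Characterization of envy-freeable allocations: for additive valuations, an allocation A = (A_1, …, A_n) is envy-freeable (i.e., there exist nonnegative payments p_1, …, p_n such that v_i(A_i) + p_i ≥ v_i(A_j) + p_j for all agents i, j) if and only if A maximizes the utilitarian welfare across all reassignments of its bundles to agents, i.e., Σ_i v_i(A_i) ≥ Σ_i v_i(A_{σ(i)}) for every permutation σ of the agents. -/
/-!
Write `u i j` for the value of agent `i` for bundle `j`. Necessity: summing the envy-freeness
inequalities along `i ↦ σ i` cancels the payments. Sufficiency: in the complete
digraph on the agents with edge weights `u i j - u i i` (the envy of `i` for `j`), welfare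
maximality says that every cycle has nonpositive weight, being the welfare change of a
cyclic permutation. The payment to `i` is the maximal weight of a simple path starting at `i`
(at least `0`, the empty path). Prepending the edge `i → j` to an optimal path from `j` either
gives a simple path from `i`, or, if the path passes through `i`, splits into a cycle through
`i` and a simple path from `i`; either way `envy i j + p j ≤ p i`.
-/

open Finset

namespace EnvyFree

section Path
variable {ι : Type*} (w : ι → ι → ℝ)

def pathWeight (l : List ι) : ℝ := (List.zipWith w l l.tail).sum

@[simp] theorem pathWeight_singleton (a : ι) : pathWeight w [a] = 0 := rfl
@[simp] theorem pathWeight_cons_cons (a b : ι) (l : List ι) :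
    pathWeight w (a :: b :: l) = w a b + pathWeight w (b :: l) := by
  simp [pathWeight]

theorem pathWeight_append_cons (l₁ : List ι) (a : ι) (l₂ : List ι) :
    pathWeight w (l₁ ++ a :: l₂) = pathWeight w (l₁ ++ [a]) + pathWeight w (a :: l₂) := by
  induction l₁ with
  | nil => simp
  | cons x l₁ ih =>
    cases l₁ with
    | nil => simp
    | cons y l₁ => simp only [List.cons_append, pathWeight_cons_cons] at ih ⊢; rw [ih]; ring

theorem pathWeight_concat_eq_sum_formPerm [DecidableEq ι] {a : ι} {t : List ι}
    (h : (a :: t).Nodup) :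
    pathWeight w (a :: t ++ [a]) = ∑ x ∈ (a :: t).toFinset, w x ((a :: t).formPerm x) := by
  rw [List.sum_toFinset _ h, pathWeight]
  congr 1
  apply List.ext_getElem
  · simp
  · intro k _ hk
    have hrot : (a :: t ++ [a]).tail = (a :: t).rotate 1 := by simp
    simp only [List.getElem_zipWith, List.getElem_map, hrot, List.getElem_rotate,
      List.formPerm_apply_getElem _ h]
    rw [List.getElem_append_left (by simpa using hk)]

end Path

section Potential
variable {ι : Type*} [Fintype ι] [DecidableEq ι] (w : ι → ι → ℝ)

theorem pathWeight_closed_nonpos (hdiag : ∀ i, w i i = 0)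
    (hperm : ∀ σ : Equiv.Perm ι, ∑ i, w i (σ i) ≤ 0) {a : ι} {t : List ι}
    (h : (a :: t).Nodup) : pathWeight w (a :: t ++ [a]) ≤ 0 := by
  rw [pathWeight_concat_eq_sum_formPerm w h,
    Finset.sum_subset (Finset.subset_univ _) fun x _ hx => ?_]
  · exact hperm _
  · rw [List.formPerm_apply_of_notMem (by simpa using hx), hdiag]

def maxPathWeight (i : ι) : ℝ :=
  (univ.filter fun l : {l : List ι // l.Nodup} => i ∉ l.1).sup' ⟨⟨[], List.nodup_nil⟩, by simp⟩
    fun l => pathWeight w (i :: l.1)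

theorem pathWeight_le_maxPathWeight {i : ι} {l : List ι} (h : (i :: l).Nodup) :
    pathWeight w (i :: l) ≤ maxPathWeight w i := by
  rw [List.nodup_cons] at h
  exact Finset.le_sup' (fun l : {l : List ι // l.Nodup} => pathWeight w (i :: l.1))
    (b := ⟨l, h.2⟩) (by simpa using h.1)

theorem exists_pathWeight_eq_maxPathWeight (i : ι) :
    ∃ l : List ι, (i :: l).Nodup ∧ pathWeight w (i :: l) = maxPathWeight w i := by
  obtain ⟨⟨l, hl⟩, hmem, heq⟩ := Finset.exists_mem_eq_sup'
    (s := univ.filter fun l : {l : List ι // l.Nodup} => i ∉ l.1) ⟨⟨[], List.nodup_nil⟩, by simp⟩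
    fun l => pathWeight w (i :: l.1)
  exact ⟨l, List.nodup_cons.2 ⟨by simpa using hmem, hl⟩, heq.symm⟩

theorem maxPathWeight_nonneg (i : ι) : 0 ≤ maxPathWeight w i :=
  pathWeight_le_maxPathWeight w (List.nodup_singleton i)

theorem add_maxPathWeight_le (hdiag : ∀ i, w i i = 0)
    (hperm : ∀ σ : Equiv.Perm ι, ∑ i, w i (σ i) ≤ 0) (i j : ι) :
    w i j + maxPathWeight w j ≤ maxPathWeight w i := by
  by_cases hij : i = j
  · simp [hij, hdiag]
  obtain ⟨l, hl, hmax⟩ := exists_pathWeight_eq_maxPathWeight w j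
  rw [← hmax]
  by_cases hi : i ∈ l
  · obtain ⟨l₁, l₂, rfl⟩ := List.append_of_mem hi
    have hnd : (i :: j :: l₁).Nodup ∧ (i :: l₂).Nodup := by
      simp only [List.nodup_cons, List.nodup_append, List.mem_append,
        List.mem_cons] at hl ⊢
      grind
    have hcycle : w i j + pathWeight w (j :: l₁ ++ [i]) ≤ 0 := by
      have := pathWeight_closed_nonpos w hdiag hperm (a := i) (t := j :: l₁) hnd.1
      simpa using this
    have htail : pathWeight w (i :: l₂) ≤ maxPathWeight w i :=
      pathWeight_le_maxPathWeight w hnd.2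
    rw [← List.cons_append, pathWeight_append_cons]
    linarith
  · have := pathWeight_le_maxPathWeight w (i := i) (l := j :: l) (by simp [hl, hij, hi])
    simpa using this

theorem exists_envyFree_payment_iff (u : ι → ι → ℝ) :
    (∃ p : ι → ℝ, (∀ i, 0 ≤ p i) ∧ ∀ i j, u i j + p j ≤ u i i + p i) ↔
      ∀ σ : Equiv.Perm ι, ∑ i, u i (σ i) ≤ ∑ i, u i i := by
  constructor
  · rintro ⟨p, -, hp⟩ σ
    have hsum := Finset.sum_le_sum fun i (_ : i ∈ univ) => hp i (σ i)
    rw [sum_add_distrib, sum_add_distrib, Equiv.sum_comp σ p] at hsum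
    linarith
  · intro hσ
    let envy i j := u i j - u i i
    refine ⟨maxPathWeight envy, maxPathWeight_nonneg envy, fun i j => ?_⟩
    have := add_maxPathWeight_le envy (fun i => sub_self (u i i))
      (fun σ => by simpa [envy, sum_sub_distrib] using hσ σ) i j
    simp only [envy] at this
    linarith

end Potential
end EnvyFree

theorem envy_freeable_iff_welfare_maximizing_general {n : ℕ} {G : Type*}
    (v : Fin n → G → ℝ)
    (A : Fin n → Finset G) :
    (∃ p : Fin n → ℝ, (∀ i, 0 ≤ p i) ∧
      ∀ i j : Fin n, (∑ g ∈ A j, v i g) + p j ≤ (∑ g ∈ A i, v i g) + p i) ↔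
    (∀ σ : Equiv.Perm (Fin n), ∑ i, ∑ g ∈ A (σ i), v i g ≤ ∑ i, ∑ g ∈ A i, v i g) :=
  EnvyFree.exists_envyFree_payment_iff fun i j => ∑ g ∈ A j, v i g

/-- Characterization of envy-freeable allocations: for additive valuations,
an allocation `A` is envy-freeable (there exist nonnegative payments making it envy-free)
if and only if `A` maximizes the utilitarian welfare across all reassignments of its
bundles to agents. -/
theorem envy_freeable_iff_welfare_maximizing {n : ℕ} {G : Type*} [DecidableEq G]
    (M : Finset G) (v : Fin n → G → ℝ) (hv : ∀ i g, 0 ≤ v i g)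
    (A : Fin n → Finset G)
    (hA : (∀ i j, i ≠ j → Disjoint (A i) (A j)) ∧ Finset.univ.biUnion A = M) :
    (∃ p : Fin n → ℝ, (∀ i, 0 ≤ p i) ∧
      ∀ i j : Fin n, (∑ g ∈ A j, v i g) + p j ≤ (∑ g ∈ A i, v i g) + p i) ↔
    (∀ σ : Equiv.Perm (Fin n), ∑ i, ∑ g ∈ A (σ i), v i g ≤ ∑ i, ∑ g ∈ A i, v i g) :=
  envy_freeable_iff_welfare_maximizing_general v A
end
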